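/- arXiv:1604.00611 — 2 statements merged into one kernel-verified Lean document; each statement's English description precedes it below -/
import Mathlib

section
/- Let G be an amenable group, {F'_{θ'} : θ' ∈ Θ'} any Følner net in G, and (X,𝒳) any Borel G-space. Then there exist a Følner subnet {F_θ : θ ∈ Θ} of {F'_{θ'}} and a map 𝒜 : L∞(X,𝒳) → ℝ^X, linear and continuous from the sup norm to the product (pointwise-convergence) topology on ℝ^X, such that for every φ ∈ L∞(X,𝒳): lim_θ A(F_θ, φ)(x) = 𝒜(φ)(x) for every x ∈ X (Moore–Smith limit), and 𝒜(φ) = 𝒜(T_g φ) for every g ∈ G. Moreover, if φ_n → ψ in (L∞(X,𝒳), ‖·‖_∞) as n → ∞, then 𝒜(φ_n)(x) → 𝒜(ψ)(x) in ℝ for every x ∈ X. -/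
open Filter Topology ENNReal
open scoped symmDiff Pointwise

/-- A (left) Følner net in a locally compact group `G` with left Haar measure `μG`:
a net of compact sets of positive Haar measure which is asymptotically invariant
under every left translation (in the sense of Moore–Smith limits). -/
def IsFolnerNet {G : Type} [Group G] [TopologicalSpace G] [MeasurableSpace G]
    (μG : MeasureTheory.Measure G) {Θ : Type} [Preorder Θ] (F : Θ → Set G) : Prop :=
  (∀ θ, IsCompact (F θ)) ∧ (∀ θ, 0 < μG (F θ)) ∧
    ∀ g : G, Tendsto (fun θ => (μG ((g • F θ) ∆ (F θ))).toReal / (μG (F θ)).toReal)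
      atTop (𝓝 0)

/-- A bundled Følner net (a directed nonempty index set together with the net). -/
structure FolnerNet {G : Type} [Group G] [TopologicalSpace G] [MeasurableSpace G]
    (μG : MeasureTheory.Measure G) where
  ι : Type
  [pre : Preorder ι]
  [ne : Nonempty ι]
  [dir : IsDirected ι (· ≤ ·)]
  F : ι → Set G
  isFolner : IsFolnerNet μG F

/-- A directed (nonempty) index type, used as the index of a subnet. -/
structure DirIndex where
  ι : Type
  [pre : Preorder ι]
  [ne : Nonempty ι]
  [dir : IsDirected ι (· ≤ ·)]

attribute [instance] DirIndex.pre DirIndex.ne DirIndex.dir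
attribute [instance] FolnerNet.pre FolnerNet.ne FolnerNet.dir

/-- A Borel action of a group `G` on a measurable space `X`: a jointly measurable
map `G × X → X` satisfying the action laws. -/
structure IsBorelAction (G : Type) [Group G] [MeasurableSpace G]
    {X : Type} [MeasurableSpace X] (T : G → X → X) : Prop where
  measurable : Measurable fun p : G × X => T p.1 p.2
  one_act : ∀ x, T 1 x = x
  mul_act : ∀ g h x, T g (T h x) = T (g * h) x

open MeasureTheory

/-- Membership in `L∞(X, 𝒳)`: bounded measurable real-valued functions. -/
def MemLinf {X : Type} [MeasurableSpace X] (φ : X → ℝ) : Prop :=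
  Measurable φ ∧ ∃ C : ℝ, ∀ x, |φ x| ≤ C

/-- The ergodic average `A(K, φ)(x) = (1/|K|) ∫_K φ(T_g x) dg`. -/
noncomputable def ergAvg {G X : Type} [MeasurableSpace G] (μG : Measure G)
    (T : G → X → X) (K : Set G) (φ : X → ℝ) (x : X) : ℝ :=
  (μG K).toReal⁻¹ * ∫ g in K, φ (T g x) ∂μG

/-- The σ-algebra `𝒳_{G,μ}` of μ-almost invariant measurable sets. -/
def invSigmaAE {G X : Type} [MeasurableSpace X] (T : G → X → X) (μ : Measure X) :
    MeasurableSpace X where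
  MeasurableSet' B := MeasurableSet B ∧ ∀ g : G, μ ((T g ⁻¹' B) ∆ B) = 0
  measurableSet_empty := ⟨MeasurableSet.empty, fun g => by simp⟩
  measurableSet_compl := fun B hB => ⟨hB.1.compl, fun g => by
    have h := hB.2 g
    rw [Set.preimage_compl, compl_symmDiff_compl]
    exact h⟩
  measurableSet_iUnion := fun f hf => ⟨MeasurableSet.iUnion fun n => (hf n).1, fun g => by
    have hsub : ((T g ⁻¹' ⋃ n, f n) ∆ (⋃ n, f n)) ⊆ ⋃ n, ((T g ⁻¹' f n) ∆ (f n)) := by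
      intro x hx
      rw [Set.mem_symmDiff] at hx
      rw [Set.preimage_iUnion] at hx
      rcases hx with ⟨hx1, hx2⟩ | ⟨hx1, hx2⟩
      · obtain ⟨n, hn⟩ := Set.mem_iUnion.1 hx1
        exact Set.mem_iUnion.2 ⟨n, Set.mem_symmDiff.2
          (Or.inl ⟨hn, fun h => hx2 (Set.mem_iUnion.2 ⟨n, h⟩)⟩)⟩
      · obtain ⟨n, hn⟩ := Set.mem_iUnion.1 hx1
        exact Set.mem_iUnion.2 ⟨n, Set.mem_symmDiff.2
          (Or.inr ⟨hn, fun h => hx2 (Set.mem_iUnion.2 ⟨n, h⟩)⟩)⟩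
    refine le_antisymm ?_ (by simp)
    calc μ ((T g ⁻¹' ⋃ n, f n) ∆ (⋃ n, f n)) ≤ μ (⋃ n, ((T g ⁻¹' f n) ∆ (f n))) :=
          measure_mono hsub
      _ ≤ ∑' n, μ ((T g ⁻¹' f n) ∆ (f n)) := measure_iUnion_le _
      _ = 0 := by simp [fun n => (hf n).2 g]⟩

/-- The σ-algebra `𝒳_G` of strictly `G`-invariant measurable sets. -/
def invSigma {G X : Type} [MeasurableSpace X] (T : G → X → X) :
    MeasurableSpace X where
  MeasurableSet' B := MeasurableSet B ∧ ∀ g : G, T g ⁻¹' B = B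
  measurableSet_empty := ⟨MeasurableSet.empty, fun g => by simp⟩
  measurableSet_compl := fun B hB => ⟨hB.1.compl, fun g => by
    rw [Set.preimage_compl, hB.2 g]⟩
  measurableSet_iUnion := fun f hf => ⟨MeasurableSet.iUnion fun n => (hf n).1, fun g => by
    rw [Set.preimage_iUnion]
    exact Set.iUnion_congr fun n => (hf n).2 g⟩


/-! ### Auxiliary machinery: ultrafilter subnets -/

/-- Index type of the canonical subnet associated to an ultrafilter. -/
def SubnetIdx {Θ' : Type} (U : Ultrafilter Θ') : Type :=
  {p : Θ' × Set Θ' // p.2 ∈ U ∧ p.1 ∈ p.2}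

instance subnetIdxPre {Θ' : Type} [Preorder Θ'] (U : Ultrafilter Θ') :
    Preorder (SubnetIdx U) where
  le p q := p.1.1 ≤ q.1.1 ∧ q.1.2 ⊆ p.1.2
  le_refl p := ⟨le_refl _, subset_rfl⟩
  le_trans p q r h1 h2 := ⟨h1.1.trans h2.1, h2.2.trans h1.2⟩

instance subnetIdxNe {Θ' : Type} [Nonempty Θ'] (U : Ultrafilter Θ') :
    Nonempty (SubnetIdx U) :=
  ⟨⟨(Classical.arbitrary Θ', Set.univ), Filter.univ_mem, trivial⟩⟩

lemma subnetIdx_directed {Θ' : Type} [Preorder Θ'] [Nonempty Θ'] [IsDirected Θ' (· ≤ ·)]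
    {U : Ultrafilter Θ'} (hU : (U : Filter Θ') ≤ atTop) :
    IsDirected (SubnetIdx U) (· ≤ ·) := by
  constructor
  rintro ⟨⟨θ1, S1⟩, hS1, hθ1⟩ ⟨⟨θ2, S2⟩, hS2, hθ2⟩
  have hIci : {θ : Θ' | θ1 ≤ θ ∧ θ2 ≤ θ} ∈ atTop := by
    obtain ⟨θ3, h13, h23⟩ := directed_of (· ≤ ·) θ1 θ2
    exact mem_atTop_sets.2 ⟨θ3, fun b hb => ⟨h13.trans hb, h23.trans hb⟩⟩
  have hmem : (S1 ∩ S2 ∩ {θ | θ1 ≤ θ ∧ θ2 ≤ θ}) ∈ U :=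
    inter_mem (inter_mem hS1 hS2) (hU hIci)
  obtain ⟨θ, hθ⟩ := Ultrafilter.nonempty_of_mem hmem
  exact ⟨⟨⟨θ, S1 ∩ S2⟩, ⟨inter_mem hS1 hS2, hθ.1⟩⟩,
    ⟨hθ.2.1, Set.inter_subset_left⟩, ⟨hθ.2.2, Set.inter_subset_right⟩⟩

lemma tendsto_subnet_proj {Θ' : Type} [Preorder Θ'] [Nonempty Θ'] [IsDirected Θ' (· ≤ ·)]
    {U : Ultrafilter Θ'} (hU : (U : Filter Θ') ≤ atTop) :
    Tendsto (fun d : SubnetIdx U => d.1.1) atTop atTop := by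
  haveI := subnetIdx_directed hU
  rw [tendsto_atTop]
  intro θ0
  have hS : {b : Θ' | θ0 ≤ b} ∈ U := hU (mem_atTop θ0)
  obtain ⟨θ1, hθ1⟩ := Ultrafilter.nonempty_of_mem hS
  rw [eventually_iff]
  exact mem_atTop_sets.2 ⟨⟨⟨θ1, {b | θ0 ≤ b}⟩, hS, hθ1⟩, fun d hd => hd.2 d.2.2⟩

lemma tendsto_subnet {Θ' : Type} [Preorder Θ'] [Nonempty Θ'] [IsDirected Θ' (· ≤ ·)]
    {U : Ultrafilter Θ'} (hU : (U : Filter Θ') ≤ atTop) {α : Type*} [TopologicalSpace α]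
    {f : Θ' → α} {L : α} (hf : Tendsto f U (𝓝 L)) :
    Tendsto (fun d : SubnetIdx U => f d.1.1) atTop (𝓝 L) := by
  haveI := subnetIdx_directed hU
  intro V hV
  have hS : f ⁻¹' V ∈ U := by rw [← Ultrafilter.mem_coe, ← Filter.mem_map]; exact hf hV
  obtain ⟨θ0, hθ0⟩ := Ultrafilter.nonempty_of_mem hS
  rw [Filter.mem_map]
  exact mem_atTop_sets.2 ⟨⟨⟨θ0, f ⁻¹' V⟩, hS, hθ0⟩, fun d hd => hd.2 d.2.2⟩

/-! ### Auxiliary analysis lemmas -/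

section AuxAnalysis
variable {G X : Type} [MeasurableSpace G] [MeasurableSpace X]

lemma integrableOn_of_bounded'' {μ : Measure G} {s : Set G} (hs : μ s ≠ ⊤)
    {f : G → ℝ} (hmeas : Measurable f) {C : ℝ} (hb : ∀ y, |f y| ≤ C) :
    IntegrableOn f s μ := by
  have h1 : IntegrableOn (fun _ : G => C) s μ :=
    integrableOn_const hs
  exact h1.mono' hmeas.aestronglyMeasurable.restrict (ae_of_all _ fun g => by
    simpa [Real.norm_eq_abs] using hb g)

lemma abs_setIntegral_le {μ : Measure G} {s : Set G} (hs : μ s ≠ ⊤)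
    {f : G → ℝ} (hmeas : Measurable f) {C : ℝ} (hb : ∀ y, |f y| ≤ C) :
    |∫ g in s, f g ∂μ| ≤ C * (μ s).toReal := by
  rw [← Real.norm_eq_abs]
  exact norm_setIntegral_le_of_norm_le_const (lt_top_iff_ne_top.2 hs)
    (fun g _ => by simpa [Real.norm_eq_abs] using hb g)

lemma setIntegral_diff_abs_le {μ : Measure G} {s t : Set G} (hs : MeasurableSet s)
    (ht : MeasurableSet t) (hsf : μ s ≠ ⊤) (htf : μ t ≠ ⊤) {f : G → ℝ} {C : ℝ}
    (hmeas : Measurable f) (hb : ∀ y, |f y| ≤ C) :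
    |∫ g in s, f g ∂μ - ∫ g in t, f g ∂μ| ≤ C * (μ (s ∆ t)).toReal := by
  have hint : ∀ u : Set G, μ u ≠ ⊤ → IntegrableOn f u μ := fun u hu =>
    integrableOn_of_bounded'' hu hmeas hb
  have hsd : μ (s \ t) ≠ ⊤ := fun h => hsf (top_le_iff.1 (h ▸ measure_mono Set.diff_subset))
  have htd : μ (t \ s) ≠ ⊤ := fun h => htf (top_le_iff.1 (h ▸ measure_mono Set.diff_subset))
  have hsplit : ∀ (u v : Set G), MeasurableSet u → MeasurableSet v → μ u ≠ ⊤ →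
      ∫ g in u, f g ∂μ = (∫ g in u ∩ v, f g ∂μ) + ∫ g in u \ v, f g ∂μ := by
    intro u v hu hv huf
    rw [← setIntegral_union (Set.disjoint_sdiff_right.mono_left Set.inter_subset_right)
      (hu.diff hv)
      (hint _ (fun h => huf (top_le_iff.1 (h ▸ measure_mono Set.inter_subset_left))))
      (hint _ (fun h => huf (top_le_iff.1 (h ▸ measure_mono Set.diff_subset))))]
    rw [Set.inter_union_diff]
  rw [hsplit s t hs ht hsf, hsplit t s ht hs htf, Set.inter_comm t s]
  have key : |(∫ g in s \ t, f g ∂μ) - ∫ g in t \ s, f g ∂μ|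
      ≤ C * (μ (s \ t)).toReal + C * (μ (t \ s)).toReal :=
    (abs_sub _ _).trans (add_le_add (abs_setIntegral_le hsd hmeas hb)
      (abs_setIntegral_le htd hmeas hb))
  have hμ : (μ (s ∆ t)).toReal = (μ (s \ t)).toReal + (μ (t \ s)).toReal := by
    rw [measure_symmDiff_eq hs.nullMeasurableSet ht.nullMeasurableSet,
      ENNReal.toReal_add hsd htd]
  calc |((∫ g in s ∩ t, f g ∂μ) + ∫ g in s \ t, f g ∂μ)
        - ((∫ g in s ∩ t, f g ∂μ) + ∫ g in t \ s, f g ∂μ)|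
      = |(∫ g in s \ t, f g ∂μ) - ∫ g in t \ s, f g ∂μ| := by ring_nf
    _ ≤ C * (μ (s \ t)).toReal + C * (μ (t \ s)).toReal := key
    _ = C * (μ (s ∆ t)).toReal := by rw [hμ]; ring

lemma ergAvg_abs_le (μG : Measure G) (T : G → X → X)
    (hT : Measurable fun p : G × X => T p.1 p.2) {K : Set G} (hK : μG K ≠ ⊤)
    {φ : X → ℝ} (hφm : Measurable φ) {C : ℝ} (hC : 0 ≤ C) (hb : ∀ y, |φ y| ≤ C) (x : X) :
    |ergAvg μG T K φ x| ≤ C := by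
  have hmeas : Measurable fun g : G => φ (T g x) :=
    hφm.comp (hT.comp (measurable_id.prodMk measurable_const))
  have h1 : |∫ g in K, φ (T g x) ∂μG| ≤ C * (μG K).toReal :=
    abs_setIntegral_le hK hmeas fun g => hb _
  rw [ergAvg, abs_mul, abs_inv, abs_of_nonneg ENNReal.toReal_nonneg]
  rcases eq_or_ne (μG K).toReal 0 with h | h
  · simp [h, hC]
  · calc (μG K).toReal⁻¹ * |∫ g in K, φ (T g x) ∂μG|
        ≤ (μG K).toReal⁻¹ * (C * (μG K).toReal) := by gcongr
      _ = C := by field_simp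

lemma ergAvg_linear (μG : Measure G) (T : G → X → X)
    (hT : Measurable fun p : G × X => T p.1 p.2) {K : Set G} (hK : μG K ≠ ⊤)
    {φ ψ : X → ℝ} (hφm : Measurable φ) (hψm : Measurable ψ)
    {Cφ Cψ : ℝ} (hbφ : ∀ y, |φ y| ≤ Cφ) (hbψ : ∀ y, |ψ y| ≤ Cψ) (c : ℝ) (x : X) :
    ergAvg μG T K (fun y => c * φ y + ψ y) x
      = c * ergAvg μG T K φ x + ergAvg μG T K ψ x := by
  have hmx : Measurable fun g : G => T g x :=
    hT.comp (measurable_id.prodMk measurable_const)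
  have intφ : IntegrableOn (fun g : G => φ (T g x)) K μG :=
    integrableOn_of_bounded'' hK (hφm.comp hmx) (fun g => hbφ _)
  have intψ : IntegrableOn (fun g : G => ψ (T g x)) K μG :=
    integrableOn_of_bounded'' hK (hψm.comp hmx) (fun g => hbψ _)
  have hthis : ∫ g in K, (c * φ (T g x) + ψ (T g x)) ∂μG
      = c * (∫ g in K, φ (T g x) ∂μG) + ∫ g in K, ψ (T g x) ∂μG := by
    rw [integral_add (intφ.const_mul c) intψ, integral_const_mul]
  simp only [ergAvg, hthis]
  ring

lemma ergAvg_sub (μG : Measure G) (T : G → X → X)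
    (hT : Measurable fun p : G × X => T p.1 p.2) {K : Set G} (hK : μG K ≠ ⊤)
    {φ ψ : X → ℝ} (hφm : Measurable φ) (hψm : Measurable ψ)
    {Cφ Cψ : ℝ} (hbφ : ∀ y, |φ y| ≤ Cφ) (hbψ : ∀ y, |ψ y| ≤ Cψ) (x : X) :
    ergAvg μG T K (fun y => φ y - ψ y) x
      = ergAvg μG T K φ x - ergAvg μG T K ψ x := by
  have h := ergAvg_linear μG T hT hK hψm hφm hbψ hbφ (-1) x
  have heq : (fun y => (-1 : ℝ) * ψ y + φ y) = fun y => φ y - ψ y := by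
    funext y; ring
  rw [heq] at h
  rw [h]; ring

end AuxAnalysis

lemma ergAvg_translate' {G X : Type} [Group G] [MeasurableSpace G] [MeasurableMul G]
    [MeasurableSpace X] (μG : Measure G) [μG.IsMulLeftInvariant]
    (T : G → X → X) (hmul : ∀ g h x, T g (T h x) = T (g*h) x)
    (K : Set G) (g : G) (φ : X → ℝ) (x : X) :
    ∫ h in K, φ (T g (T h x)) ∂μG = ∫ h in g • K, φ (T h x) ∂μG := by
  have hemb : MeasurableEmbedding (fun h : G => g * h) :=
    (MeasurableEquiv.mulLeft g).measurableEmbedding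
  have himg : g • K = (fun h => g * h) '' K := rfl
  rw [himg, (measurePreserving_mul_left μG g).setIntegral_image_emb hemb
    (fun h => φ (T h x)) K]
  simp only [hmul]

/-- **`L∞`-pointwise convergence everywhere along a subnet** (Theorem 3.3 of the
paper).  Given any Følner net `{F'_{θ'}}` in an amenable group `G` and any Borel
`G`-space `(X, 𝒳)`, there are a Følner subnet `{F_θ}` and a map
`𝒜 : L∞(X,𝒳) → ℝ^X`, linear and continuous from the sup norm to the product
topology, such that the ergodic averages `A(F_θ, φ)(x)` converge (Moore–Smith) to
`𝒜(φ)(x)` for every `x ∈ X`, and `𝒜(φ) = 𝒜(T_g φ)` for every `g ∈ G`.  Moreover,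
if `φ_n → ψ` uniformly then `𝒜(φ_n)(x) → 𝒜(ψ)(x)` for every `x ∈ X`. -/
theorem linf_pointwise_convergence_subnet
    {G : Type} [Group G] [TopologicalSpace G] [IsTopologicalGroup G] [LocallyCompactSpace G]
    [T2Space G] [MeasurableSpace G] [BorelSpace G]
    (μG : Measure G) [μG.IsHaarMeasure]
    {Θ' : Type} [Preorder Θ'] [Nonempty Θ'] [IsDirected Θ' (· ≤ ·)]
    (F' : Θ' → Set G) (hF' : IsFolnerNet μG F')
    {X : Type} [MeasurableSpace X] (T : G → X → X) (hT : IsBorelAction G T) :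
    ∃ (D : DirIndex) (h : D.ι → Θ'),
      -- {F' ∘ h} is a Følner subnet of {F'}
      Tendsto h atTop atTop ∧ IsFolnerNet μG (F' ∘ h) ∧
      ∃ A : (X → ℝ) → (X → ℝ),
        -- 𝒜 is linear on L∞(X,𝒳)
        (∀ (φ ψ : X → ℝ), MemLinf φ → MemLinf ψ → ∀ c : ℝ,
          A (fun x => c * φ x + ψ x) = fun x => c * A φ x + A ψ x) ∧
        -- 𝒜 is continuous from (L∞, ‖·‖_∞) to ℝ^X with the product topology
        (∀ x : X, ∀ ε : ℝ, 0 < ε → ∃ δ : ℝ, 0 < δ ∧ ∀ (φ ψ : X → ℝ),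
          MemLinf φ → MemLinf ψ → (∀ y, |φ y - ψ y| ≤ δ) → |A φ x - A ψ x| ≤ ε) ∧
        -- pointwise Moore–Smith convergence everywhere
        (∀ φ : X → ℝ, MemLinf φ → ∀ x : X,
          Tendsto (fun θ => ergAvg μG T (F' (h θ)) φ x) atTop (𝓝 (A φ x))) ∧
        -- 𝒜(φ) = 𝒜(T_g φ)
        (∀ φ : X → ℝ, MemLinf φ → ∀ g : G, A φ = A (fun x => φ (T g x))) ∧
        -- sequential continuity: uniform convergence implies pointwise convergence
        -- of the limits
        (∀ (φs : ℕ → X → ℝ) (ψ : X → ℝ), (∀ n, MemLinf (φs n)) → MemLinf ψ →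
          (∀ ε : ℝ, 0 < ε → ∃ N : ℕ, ∀ n ≥ N, ∀ y : X, |φs n y - ψ y| ≤ ε) →
          ∀ x : X, Tendsto (fun n => A (φs n) x) atTop (𝓝 (A ψ x))) := by
  classical
  obtain ⟨hcomp, hpos, hten⟩ := hF'
  haveI : (atTop : Filter Θ').NeBot := atTop_neBot
  obtain ⟨U, hU⟩ := Ultrafilter.exists_le (atTop : Filter Θ')
  haveI hdir := subnetIdx_directed hU
  have hfin : ∀ θ, μG (F' θ) ≠ ⊤ := fun θ => (hcomp θ).measure_lt_top.ne
  have horb : ∀ (φ : X → ℝ), Measurable φ → ∀ x : X, Measurable fun g : G => φ (T g x) :=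
    fun φ hφ x => hφ.comp (hT.measurable.comp (measurable_id.prodMk measurable_const))
  set A : (X → ℝ) → X → ℝ :=
    fun φ x => limUnder (U : Filter Θ') (fun θ => ergAvg μG T (F' θ) φ x) with hAdef
  have hAt : ∀ (φ : X → ℝ), MemLinf φ → ∀ x : X,
      Tendsto (fun θ => ergAvg μG T (F' θ) φ x) (U : Filter Θ') (𝓝 (A φ x)) := by
    rintro φ ⟨hφm, C, hC⟩ x
    have hC0 : 0 ≤ C := (abs_nonneg _).trans (hC x)
    apply tendsto_nhds_limUnder
    have hmem : (↑(U.map fun θ => ergAvg μG T (F' θ) φ x) : Filter ℝ)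
        ≤ 𝓟 (Set.Icc (-C) C) := by
      rw [Ultrafilter.coe_map, le_principal_iff, mem_map]
      refine univ_mem' fun θ => ?_
      exact abs_le.1 (ergAvg_abs_le μG T hT.measurable (hfin θ) hφm hC0 hC x)
    obtain ⟨L, _, hL⟩ := isCompact_Icc.ultrafilter_le_nhds _ hmem
    exact ⟨L, by rwa [Ultrafilter.coe_map] at hL⟩
  have hdiffA : ∀ (φ ψ : X → ℝ), MemLinf φ → MemLinf ψ → ∀ δ : ℝ,
      (∀ y, |φ y - ψ y| ≤ δ) → ∀ x : X, |A φ x - A ψ x| ≤ δ := by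
    rintro φ ψ hφ hψ δ hδ x
    obtain ⟨hφm, Cφ, hCφ⟩ := hφ
    obtain ⟨hψm, Cψ, hCψ⟩ := hψ
    have hδ0 : 0 ≤ δ := (abs_nonneg _).trans (hδ x)
    have hlim : Tendsto (fun θ => ergAvg μG T (F' θ) φ x - ergAvg μG T (F' θ) ψ x)
        (U : Filter Θ') (𝓝 (A φ x - A ψ x)) :=
      (hAt φ ⟨hφm, Cφ, hCφ⟩ x).sub (hAt ψ ⟨hψm, Cψ, hCψ⟩ x)
    have hbd : ∀ θ, |ergAvg μG T (F' θ) φ x - ergAvg μG T (F' θ) ψ x| ≤ δ := by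
      intro θ
      rw [← ergAvg_sub μG T hT.measurable (hfin θ) hφm hψm hCφ hCψ x]
      exact ergAvg_abs_le μG T hT.measurable (hfin θ) (hφm.sub hψm) hδ0 hδ x
    exact le_of_tendsto hlim.abs (Filter.Eventually.of_forall hbd)
  refine ⟨⟨SubnetIdx U⟩, fun d => d.1.1, tendsto_subnet_proj hU,
    ⟨fun d => hcomp _, fun d => hpos _, fun g =>
      tendsto_subnet hU ((hten g).mono_left hU)⟩, A, ?_, ?_, ?_, ?_, ?_⟩
  · -- linearity
    rintro φ ψ hφ hψ c
    obtain ⟨hφm, Cφ, hCφ⟩ := hφ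
    obtain ⟨hψm, Cψ, hCψ⟩ := hψ
    funext x
    have hcombo : MemLinf (fun y => c * φ y + ψ y) :=
      ⟨(hφm.const_mul c).add hψm, |c| * Cφ + Cψ, fun y =>
        (abs_add_le _ _).trans (add_le_add (by
          rw [abs_mul]; exact mul_le_mul_of_nonneg_left (hCφ y) (abs_nonneg c)) (hCψ y))⟩
    have h1 := hAt _ hcombo x
    have h2 : Tendsto (fun θ => ergAvg μG T (F' θ) (fun y => c * φ y + ψ y) x)
        (U : Filter Θ') (𝓝 (c * A φ x + A ψ x)) := by
      have h3 := ((hAt φ ⟨hφm, Cφ, hCφ⟩ x).const_mul c).add (hAt ψ ⟨hψm, Cψ, hCψ⟩ x)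
      exact h3.congr fun θ =>
        (ergAvg_linear μG T hT.measurable (hfin θ) hφm hψm hCφ hCψ c x).symm
    exact tendsto_nhds_unique h1 h2
  · -- continuity
    intro x ε hε
    exact ⟨ε, hε, fun φ ψ hφ hψ hb => hdiffA φ ψ hφ hψ ε hb x⟩
  · -- pointwise Moore–Smith convergence
    intro φ hφ x
    exact tendsto_subnet hU (hAt φ hφ x)
  · -- invariance
    rintro φ hφ g
    obtain ⟨hφm, C, hC⟩ := hφ
    funext x
    have hC0 : 0 ≤ C := (abs_nonneg _).trans (hC x)
    have hφg : MemLinf (fun y => φ (T g y)) :=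
      ⟨hφm.comp (hT.measurable.comp (measurable_const.prodMk measurable_id)), C,
        fun y => hC _⟩
    have hinv : ∀ θ : Θ',
        |ergAvg μG T (F' θ) (fun y => φ (T g y)) x - ergAvg μG T (F' θ) φ x|
          ≤ C * ((μG ((g • F' θ) ∆ (F' θ))).toReal / (μG (F' θ)).toReal) := by
      intro θ
      have hK := hcomp θ
      have hKm : MeasurableSet (F' θ) := hK.isClosed.measurableSet
      have hgK : IsCompact (g • F' θ) := by
        rw [show g • F' θ = (fun h => g * h) '' F' θ from rfl]
        exact hK.image (continuous_mul_left g)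
      have hgKm : MeasurableSet (g • F' θ) := hgK.isClosed.measurableSet
      have h1 : ergAvg μG T (F' θ) (fun y => φ (T g y)) x
          = (μG (F' θ)).toReal⁻¹ * ∫ h in g • F' θ, φ (T h x) ∂μG := by
        rw [ergAvg, ← ergAvg_translate' μG T hT.mul_act (F' θ) g φ x]
      rw [h1, ergAvg, ← mul_sub, abs_mul, abs_inv, abs_of_nonneg ENNReal.toReal_nonneg]
      have h2 : |(∫ h in g • F' θ, φ (T h x) ∂μG) - ∫ h in F' θ, φ (T h x) ∂μG|
          ≤ C * (μG ((g • F' θ) ∆ (F' θ))).toReal :=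
        setIntegral_diff_abs_le hgKm hKm hgK.measure_lt_top.ne (hfin θ)
          (horb φ hφm x) (fun h => hC _)
      calc (μG (F' θ)).toReal⁻¹
            * |(∫ h in g • F' θ, φ (T h x) ∂μG) - ∫ h in F' θ, φ (T h x) ∂μG|
          ≤ (μG (F' θ)).toReal⁻¹ * (C * (μG ((g • F' θ) ∆ (F' θ))).toReal) := by gcongr
        _ = C * ((μG ((g • F' θ) ∆ (F' θ))).toReal / (μG (F' θ)).toReal) := by
            rw [div_eq_mul_inv]; ring
    have hratio : Tendsto
        (fun θ => C * ((μG ((g • F' θ) ∆ (F' θ))).toReal / (μG (F' θ)).toReal))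
        (U : Filter Θ') (𝓝 0) := by
      have h4 := ((hten g).const_mul C).mono_left hU
      simpa using h4
    have hd0 : Tendsto (fun θ => ergAvg μG T (F' θ) (fun y => φ (T g y)) x
        - ergAvg μG T (F' θ) φ x) (U : Filter Θ') (𝓝 0) :=
      squeeze_zero_norm (fun θ => by simpa [Real.norm_eq_abs] using hinv θ) hratio
    have h2 : Tendsto (fun θ => ergAvg μG T (F' θ) (fun y => φ (T g y)) x)
        (U : Filter Θ') (𝓝 (A φ x)) := by
      have h5 := (hAt φ ⟨hφm, C, hC⟩ x).add hd0
      rw [add_zero] at h5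
      exact h5.congr fun θ => by ring
    exact (tendsto_nhds_unique (hAt _ hφg x) h2).symm
  · -- sequential continuity
    intro φs ψ hφs hψ hconv x
    rw [Metric.tendsto_atTop]
    intro ε hε
    obtain ⟨N, hN⟩ := hconv (ε/2) (by positivity)
    refine ⟨N, fun n hn => ?_⟩
    rw [Real.dist_eq]
    exact lt_of_le_of_lt (hdiffA _ _ (hφs n) hψ (ε/2) (hN n hn) x) (by linarith)
end

section
/- Let G and H be σ-compact amenable groups and let {F_n : n ∈ ℕ} and {K_n : n ∈ ℕ} be L∞-admissible Følner sequences in G and H respectively, with associated limit operators A_T(φ)(x) = lim_n A_T(F_n, φ)(x) and A_S(φ)(x) = lim_n A_S(K_n, φ)(x). Then for any Borel actions G↷_T X and H↷_S X on a measurable space (X,𝒳) and any φ ∈ L∞(X,𝒳): lim_{n→∞} (1/(|F_n||K_n|)) ∫_{F_n} ∫_{K_n} φ(S_h T_g x) dh dg = A_T(A_S(φ))(x) for every x ∈ X. Moreover, for every probability measure μ ∈ M(G↷_T X) ∩ M(H↷_S X), A_T(A_S(φ)) = E_μ( E_μ(φ | 𝒳_{S,μ}) | 𝒳_{G,μ}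 ) μ-a.e. -/
open Filter Topology ENNReal
open scoped symmDiff Pointwise

open MeasureTheory

section DZAux

set_option linter.unusedSectionVars false
open MeasureTheory Filter Topology
open scoped symmDiff Pointwise

variable {X : Type} [MeasurableSpace X]

/-- A pointwise supremum of a uniformly bounded sequence of measurable real functions
is measurable. -/
lemma measurable_iSup_bdd {f : ℕ → X → ℝ} (hf : ∀ n, Measurable (f n))
    {C : ℝ} (hC : ∀ n x, f n x ≤ C) : Measurable fun x => ⨆ n, f n x := by
  let pm : ℕ → X → ℝ := fun M x => Nat.rec (f 0 x) (fun M r => max r (f (M + 1) x)) M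
  have pm_succ : ∀ M x, pm (M + 1) x = max (pm M x) (f (M + 1) x) := fun M x => rfl
  have pmmeas : ∀ M, Measurable (pm M) := by
    intro M; induction M with
    | zero => exact hf 0
    | succ M ih => exact ih.max (hf (M + 1))
  have pmleC : ∀ M x, pm M x ≤ C := by
    intro M x; induction M with
    | zero => exact hC 0 x
    | succ M ih => exact max_le ih (hC (M + 1) x)
  have f_le_pm : ∀ M n x, n ≤ M → f n x ≤ pm M x := by
    intro M; induction M with
    | zero => intro n x hn; interval_cases n; exact le_rfl
    | succ M ih =>
      intro n x hn
      rcases Nat.lt_or_ge n (M + 1) with h | h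
      · exact le_trans (ih n x (Nat.lt_succ_iff.mp h)) (by rw [pm_succ]; exact le_max_left _ _)
      · have : n = M + 1 := le_antisymm hn h
        subst this; rw [pm_succ]; exact le_max_right _ _
  have bddf : ∀ x, BddAbove (Set.range fun n => f n x) := by
    intro x; exact ⟨C, by rintro _ ⟨n, rfl⟩; exact hC n x⟩
  have bddpm : ∀ x, BddAbove (Set.range fun M => pm M x) := by
    intro x; exact ⟨C, by rintro _ ⟨M, rfl⟩; exact pmleC M x⟩
  have pm_le_sup : ∀ M x, pm M x ≤ ⨆ n, f n x := by
    intro M x; induction M with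
    | zero => exact le_ciSup (bddf x) 0
    | succ M ih => rw [pm_succ]; exact max_le ih (le_ciSup (bddf x) (M + 1))
  have hsup_eq : ∀ x, (⨆ n, f n x) = ⨆ M, pm M x := by
    intro x
    apply le_antisymm
    · exact ciSup_le fun n => le_trans (f_le_pm n n x le_rfl) (le_ciSup (bddpm x) n)
    · exact ciSup_le fun M => pm_le_sup M x
  have pmmono : ∀ x, Monotone fun M => pm M x := by
    intro x
    apply monotone_nat_of_le_succ
    intro M; rw [pm_succ]; exact le_max_left _ _
  have htend : ∀ x, Tendsto (fun M => pm M x) atTop (𝓝 (⨆ M, pm M x)) :=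
    fun x => tendsto_atTop_ciSup (pmmono x) (bddpm x)
  have : Measurable fun x => ⨆ M, pm M x := by
    apply measurable_of_tendsto_metrizable' atTop pmmeas
    rw [tendsto_pi_nhds]
    exact htend
  simpa only [hsup_eq] using this

variable {G : Type} [MeasurableSpace G] {μG : Measure G} {T : G → X → X}

lemma measurable_comp_act (hT : Measurable fun p : G × X => T p.1 p.2) {χ : X → ℝ}
    (hχ : Measurable χ) (x : X) : Measurable fun g => χ (T g x) :=
  hχ.comp (hT.comp (measurable_id.prodMk measurable_const))

lemma integrable_comp_act (hT : Measurable fun p : G × X => T p.1 p.2)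
    {K : Set G} (hKfin : μG K ≠ ∞) {χ : X → ℝ} (hχ : Measurable χ)
    {C : ℝ} (hC : ∀ y, |χ y| ≤ C) (x : X) :
    Integrable (fun g => χ (T g x)) (μG.restrict K) := by
  haveI : IsFiniteMeasure (μG.restrict K) :=
    ⟨by rwa [Measure.restrict_apply_univ, lt_top_iff_ne_top]⟩
  refine (integrable_const C).mono' (measurable_comp_act hT hχ x).aestronglyMeasurable ?_
  exact ae_of_all _ fun g => by simpa [Real.norm_eq_abs] using hC (T g x)

lemma ergAvg_add (hT : Measurable fun p : G × X => T p.1 p.2) {K : Set G} (hKfin : μG K ≠ ∞)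
    {χ₁ χ₂ : X → ℝ} (h₁ : Measurable χ₁) (h₂ : Measurable χ₂)
    {C₁ C₂ : ℝ} (hC₁ : ∀ y, |χ₁ y| ≤ C₁) (hC₂ : ∀ y, |χ₂ y| ≤ C₂) (x : X) :
    ergAvg μG T K (fun y => χ₁ y + χ₂ y) x = ergAvg μG T K χ₁ x + ergAvg μG T K χ₂ x := by
  unfold ergAvg
  rw [integral_add (integrable_comp_act hT hKfin h₁ hC₁ x) (integrable_comp_act hT hKfin h₂ hC₂ x),
    mul_add]

lemma ergAvg_sub_s15 (hT : Measurable fun p : G × X => T p.1 p.2) {K : Set G} (hKfin : μG K ≠ ∞)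
    {χ₁ χ₂ : X → ℝ} (h₁ : Measurable χ₁) (h₂ : Measurable χ₂)
    {C₁ C₂ : ℝ} (hC₁ : ∀ y, |χ₁ y| ≤ C₁) (hC₂ : ∀ y, |χ₂ y| ≤ C₂) (x : X) :
    ergAvg μG T K (fun y => χ₁ y - χ₂ y) x = ergAvg μG T K χ₁ x - ergAvg μG T K χ₂ x := by
  unfold ergAvg
  rw [integral_sub (integrable_comp_act hT hKfin h₁ hC₁ x) (integrable_comp_act hT hKfin h₂ hC₂ x),
    mul_sub]

lemma ergAvg_const_mul (c : ℝ) (K : Set G) (χ : X → ℝ) (x : X) :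
    ergAvg μG T K (fun y => c * χ y) x = c * ergAvg μG T K χ x := by
  unfold ergAvg
  rw [integral_const_mul]; ring

lemma ergAvg_mono (hT : Measurable fun p : G × X => T p.1 p.2) {K : Set G} (hKfin : μG K ≠ ∞)
    {χ₁ χ₂ : X → ℝ} (h₁ : Measurable χ₁) (h₂ : Measurable χ₂)
    {C₁ C₂ : ℝ} (hC₁ : ∀ y, |χ₁ y| ≤ C₁) (hC₂ : ∀ y, |χ₂ y| ≤ C₂)
    (hle : ∀ y, χ₁ y ≤ χ₂ y) (x : X) :
    ergAvg μG T K χ₁ x ≤ ergAvg μG T K χ₂ x := by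
  unfold ergAvg
  apply mul_le_mul_of_nonneg_left _ (by positivity)
  exact integral_mono (integrable_comp_act hT hKfin h₁ hC₁ x)
    (integrable_comp_act hT hKfin h₂ hC₂ x) fun g => hle (T g x)

lemma ergAvg_nonneg {K : Set G} {χ : X → ℝ} (hχ : ∀ y, 0 ≤ χ y) (x : X) :
    0 ≤ ergAvg μG T K χ x := by
  unfold ergAvg
  exact mul_nonneg (by positivity) (integral_nonneg fun g => hχ (T g x))

lemma ergAvg_abs_le_s15 {K : Set G} (hKfin : μG K ≠ ∞) {χ : X → ℝ} (x : X)
    (hχm : AEStronglyMeasurable (fun g => χ (T g x)) (μG.restrict K))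
    {C : ℝ} (hC : ∀ y, |χ y| ≤ C) :
    |ergAvg μG T K χ x| ≤ C := by
  have hC0 : 0 ≤ C := le_trans (abs_nonneg _) (hC x)
  unfold ergAvg
  rw [abs_mul, abs_of_nonneg (inv_nonneg.mpr ENNReal.toReal_nonneg)]
  have h1 : |∫ g in K, χ (T g x) ∂μG| ≤ C * (μG K).toReal := by
    rw [← Real.norm_eq_abs]
    exact norm_setIntegral_le_of_norm_le_const (lt_top_iff_ne_top.mpr hKfin)
      (fun g _ => by simpa [Real.norm_eq_abs] using hC (T g x))
  calc (μG K).toReal⁻¹ * |∫ g in K, χ (T g x) ∂μG| ≤ (μG K).toReal⁻¹ * (C * (μG K).toReal) :=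
        mul_le_mul_of_nonneg_left h1 (by positivity)
    _ ≤ C := by
        rcases eq_or_ne ((μG K).toReal) 0 with h | h
        · simp [h, hC0]
        · rw [mul_comm C, ← mul_assoc, inv_mul_cancel₀ h, one_mul]

lemma ergAvg_abs (hT : Measurable fun p : G × X => T p.1 p.2) {K : Set G} (hKfin : μG K ≠ ∞)
    {χ : X → ℝ} (hχ : Measurable χ) {C : ℝ} (hC : ∀ y, |χ y| ≤ C) (x : X) :
    |ergAvg μG T K χ x| ≤ ergAvg μG T K (fun y => |χ y|) x := by
  unfold ergAvg
  rw [abs_mul, abs_of_nonneg (inv_nonneg.mpr ENNReal.toReal_nonneg)]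
  apply mul_le_mul_of_nonneg_left _ (by positivity)
  rw [← Real.norm_eq_abs]
  exact (norm_integral_le_integral_norm _).trans (le_of_eq (by simp [Real.norm_eq_abs]))

end DZAux
section DZDiag

set_option linter.unusedSectionVars false
open MeasureTheory Filter Topology

variable {X : Type} [MeasurableSpace X]
variable {G : Type} [MeasurableSpace G]

/-- The diagonal convergence lemma: if `ψ n → ψl` pointwise with a uniform bound, then
the ergodic averages `A(F n, ψ n)(x)` converge to `AT ψl x`, provided the averages of
every bounded measurable function converge at `x`. -/
theorem diag_tendsto (μG : Measure G) (T : G → X → X)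
    (hT : Measurable fun p : G × X => T p.1 p.2)
    (F : ℕ → Set G) (hFfin : ∀ n, μG (F n) ≠ ∞) (hFpos : ∀ n, (μG (F n)).toReal ≠ 0)
    (AT : (X → ℝ) → X → ℝ) (x : X)
    (hAT : ∀ χ : X → ℝ, MemLinf χ → Tendsto (fun n => ergAvg μG T (F n) χ x) atTop (𝓝 (AT χ x)))
    (ψ : ℕ → X → ℝ) (ψl : X → ℝ) (hψlm : Measurable ψl)
    (hψm : ∀ n, Measurable (ψ n)) {C : ℝ} (hC : ∀ n y, |ψ n y| ≤ C) (hCl : ∀ y, |ψl y| ≤ C)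
    (hconv : ∀ y, Tendsto (fun n => ψ n y) atTop (𝓝 (ψl y))) :
    Tendsto (fun n => ergAvg μG T (F n) (ψ n) x) atTop (𝓝 (AT ψl x)) := by
  have hC0 : 0 ≤ C := le_trans (abs_nonneg _) (hC 0 x)
  -- the deviation functions and their tail suprema
  set D : ℕ → X → ℝ := fun n y => |ψ n y - ψl y| with hD
  have hDm : ∀ n, Measurable (D n) := fun n => ((hψm n).sub hψlm).abs
  have hDb : ∀ n y, D n y ≤ 2 * C := fun n y =>
    (abs_sub _ _).trans (by have := hC n y; have := hCl y; linarith)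
  have hD0 : ∀ n y, 0 ≤ D n y := fun n y => abs_nonneg _
  set ρ : ℕ → X → ℝ := fun N y => ⨆ m : ℕ, D (N + m) y with hρ
  have bddD : ∀ N y, BddAbove (Set.range fun m => D (N + m) y) := by
    intro N y; exact ⟨2 * C, by rintro _ ⟨m, rfl⟩; exact hDb _ y⟩
  have hρm : ∀ N, Measurable (ρ N) :=
    fun N => measurable_iSup_bdd (fun m => hDm (N + m)) (fun m y => hDb (N + m) y)
  have hρ0 : ∀ N y, 0 ≤ ρ N y := fun N y => le_trans (hD0 N y) (by
    simpa using le_ciSup (bddD N y) 0)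
  have hρb : ∀ N y, ρ N y ≤ 2 * C := fun N y => ciSup_le fun m => hDb _ y
  have hρabs : ∀ N y, |ρ N y| ≤ 2 * C := fun N y => abs_le.mpr ⟨by linarith [hρ0 N y], hρb N y⟩
  have hρmem : ∀ N, MemLinf (ρ N) := fun N => ⟨hρm N, 2 * C, hρabs N⟩
  have hρanti : ∀ y, Antitone fun N => ρ N y := by
    intro y
    apply antitone_nat_of_succ_le
    intro N
    apply ciSup_le
    intro m
    have : N + 1 + m = N + (m + 1) := by omega
    rw [this]
    exact le_ciSup (bddD N y) (m + 1)
  have hρge : ∀ N n y, N ≤ n → D n y ≤ ρ N y := by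
    intro N n y h
    have : N + (n - N) = n := by omega
    calc D n y = D (N + (n - N)) y := by rw [this]
      _ ≤ ρ N y := le_ciSup (bddD N y) (n - N)
  have hρto0 : ∀ y, Tendsto (fun N => ρ N y) atTop (𝓝 0) := by
    intro y
    rw [Metric.tendsto_atTop]
    intro ε hε
    obtain ⟨M, hM⟩ := (Metric.tendsto_atTop.mp (hconv y)) (ε / 2) (by linarith)
    refine ⟨M, fun N hN => ?_⟩
    have h1 : ρ N y ≤ ε / 2 := by
      apply ciSup_le
      intro m
      have := hM (N + m) (by omega)
      rw [Real.dist_eq] at this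
      exact le_of_lt this
    rw [Real.dist_eq, sub_zero, abs_of_nonneg (hρ0 N y)]
    linarith
  -- the limit functional values
  set A : ℕ → ℝ := fun N => AT (ρ N) x with hA
  have hAN : ∀ N, Tendsto (fun n => ergAvg μG T (F n) (ρ N) x) atTop (𝓝 (A N)) :=
    fun N => hAT (ρ N) (hρmem N)
  have hAanti : Antitone A := by
    apply antitone_nat_of_succ_le
    intro N
    refine le_of_tendsto_of_tendsto' (hAN (N + 1)) (hAN N) fun n => ?_
    exact ergAvg_mono hT (hFfin n) (hρm (N + 1)) (hρm N) (hρabs (N + 1)) (hρabs N)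
      (fun y => hρanti y (Nat.le_succ N)) x
  have hAnn : ∀ N, 0 ≤ A N := fun N =>
    ge_of_tendsto (hAN N) (Eventually.of_forall fun n => ergAvg_nonneg (hρ0 N) x)
  have hbddA : BddBelow (Set.range A) := ⟨0, by rintro _ ⟨N, rfl⟩; exact hAnn N⟩
  set a : ℝ := ⨅ N, A N with ha
  have hAto : Tendsto A atTop (𝓝 a) := tendsto_atTop_ciInf hAanti hbddA
  have ha0 : 0 ≤ a := le_ciInf hAnn
  have haA : ∀ N, a ≤ A N := fun N => ciInf_le hbddA N
  -- dominated convergence for each fixed n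
  have hDCT : ∀ n, Tendsto (fun N => ergAvg μG T (F n) (ρ N) x) atTop (𝓝 0) := by
    intro n
    haveI : IsFiniteMeasure (μG.restrict (F n)) :=
      ⟨by rw [Measure.restrict_apply_univ]; exact lt_top_iff_ne_top.mpr (hFfin n)⟩
    have h0 : Tendsto (fun N => ∫ g in F n, ρ N (T g x) ∂μG) atTop
        (𝓝 (∫ g in F n, (0 : ℝ) ∂μG)) := by
      apply tendsto_integral_of_dominated_convergence (fun _ => 2 * C)
      · exact fun N => (measurable_comp_act hT (hρm N) x).aestronglyMeasurable
      · exact integrable_const _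
      · exact fun N => ae_of_all _ fun g => by
          simpa [Real.norm_eq_abs] using hρabs N (T g x)
      · exact ae_of_all _ fun g => hρto0 (T g x)
    simp only [integral_zero] at h0
    have := h0.const_mul ((μG (F n)).toReal⁻¹)
    simpa [ergAvg] using this
  -- main claim : a = 0
  have hae : a = 0 := by
    by_contra hne
    have hapos : 0 < a := lt_of_le_of_ne ha0 (Ne.symm hne)
    set ε : ℝ := a / 8 with hε
    have hεpos : 0 < ε := by positivity
    -- choose N₀
    obtain ⟨N₀, hN₀⟩ : ∃ N, A N ≤ a + ε :=
      (hAto.eventually_le_const (by linarith : a < a + ε)).exists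
    -- choose n₀
    obtain ⟨n₀, hn₀⟩ : ∃ n, |ergAvg μG T (F n) (ρ N₀) x - A N₀| ≤ ε := by
      obtain ⟨n, hn⟩ := (Metric.tendsto_atTop.mp (hAN N₀)) ε hεpos
      exact ⟨n, le_of_lt (by simpa [Real.dist_eq] using hn n le_rfl)⟩
    -- the recursive step
    have step : ∀ N n : ℕ, ∃ p : ℕ × ℕ, N < p.1 ∧ n < p.2 ∧
        ergAvg μG T (F n) (ρ p.1) x ≤ ε ∧
        |ergAvg μG T (F p.2) (ρ N₀) x - A N₀| ≤ ε ∧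
        |ergAvg μG T (F p.2) (ρ p.1) x - A p.1| ≤ ε := by
      intro N n
      obtain ⟨N', hNN', hN'⟩ : ∃ N', N < N' ∧ ergAvg μG T (F n) (ρ N') x ≤ ε := by
        have := ((hDCT n).eventually_le_const hεpos).and (eventually_gt_atTop N)
        obtain ⟨N', h1, h2⟩ := this.exists
        exact ⟨N', h2, h1⟩
      obtain ⟨n', hnn', h1, h2⟩ : ∃ n', n < n' ∧
          |ergAvg μG T (F n') (ρ N₀) x - A N₀| ≤ ε ∧
          |ergAvg μG T (F n') (ρ N') x - A N'| ≤ ε := by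
        have e1 := (Metric.tendsto_atTop.mp (hAN N₀)) ε hεpos
        have e2 := (Metric.tendsto_atTop.mp (hAN N')) ε hεpos
        obtain ⟨m1, hm1⟩ := e1; obtain ⟨m2, hm2⟩ := e2
        refine ⟨max (max m1 m2) (n + 1), by omega, ?_, ?_⟩
        · exact le_of_lt (by simpa [Real.dist_eq] using hm1 _ (by omega))
        · exact le_of_lt (by simpa [Real.dist_eq] using hm2 _ (by omega))
      exact ⟨(N', n'), hNN', hnn', hN', h1, h2⟩
    choose stepf hs1 hs2 hs3 hs4 hs5 using step
    set seq : ℕ → ℕ × ℕ := fun k => Nat.rec (N₀, n₀) (fun _ p => stepf p.1 p.2) k with hseq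
    set Ns : ℕ → ℕ := fun k => (seq k).1 with hNs
    set ns : ℕ → ℕ := fun k => (seq k).2 with hns
    have hNssucc : ∀ k, Ns (k + 1) = (stepf (Ns k) (ns k)).1 := fun k => rfl
    have hnssucc : ∀ k, ns (k + 1) = (stepf (Ns k) (ns k)).2 := fun k => rfl
    have hNs0 : Ns 0 = N₀ := rfl
    have hns0 : ns 0 = n₀ := rfl
    have hNsmono : StrictMono Ns := by
      apply strictMono_nat_of_lt_succ
      intro k
      rw [hNssucc k]
      exact hs1 (Ns k) (ns k)
    have hnsmono : StrictMono ns := by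
      apply strictMono_nat_of_lt_succ
      intro k
      rw [hnssucc k]
      exact hs2 (Ns k) (ns k)
    -- the key estimates along the sequence
    have hC3 : ∀ k, ergAvg μG T (F (ns k)) (ρ (Ns (k + 1))) x ≤ ε := by
      intro k
      rw [hNssucc k]
      exact hs3 (Ns k) (ns k)
    have hC1 : ∀ k, |ergAvg μG T (F (ns k)) (ρ N₀) x - A N₀| ≤ ε := by
      intro k
      cases k with
      | zero => exact hn₀
      | succ k =>
        rw [hnssucc k]
        exact hs4 (Ns k) (ns k)
    have hC2 : ∀ k, |ergAvg μG T (F (ns k)) (ρ (Ns k)) x - A (Ns k)| ≤ ε := by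
      intro k
      cases k with
      | zero => exact hn₀
      | succ k =>
        rw [hnssucc k, hNssucc k]
        exact hs5 (Ns k) (ns k)
    -- partial sums of differences of tail suprema
    set P : ℕ → X → ℝ := fun m y => ∑ j ∈ Finset.range m, (ρ (Ns (2*j)) y - ρ (Ns (2*j+1)) y)
      with hP
    have hPsucc : ∀ m y, P (m+1) y = P m y + (ρ (Ns (2*m)) y - ρ (Ns (2*m+1)) y) := by
      intro m y; simp only [hP]; rw [Finset.sum_range_succ]
    have hP0 : ∀ y, P 0 y = 0 := by intro y; simp [hP]
    have hterm_nonneg : ∀ j y, 0 ≤ ρ (Ns (2*j)) y - ρ (Ns (2*j+1)) y := fun j y =>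
      sub_nonneg.mpr (hρanti y (le_of_lt (hNsmono (Nat.lt_succ_self (2*j)))))
    have hPm : ∀ m, Measurable (P m) := fun m =>
      Finset.measurable_sum _ (fun j _ => (hρm _).sub (hρm _))
    have hPnonneg : ∀ m y, 0 ≤ P m y := fun m y =>
      Finset.sum_nonneg fun j _ => hterm_nonneg j y
    have hPmono : ∀ y, Monotone fun m => P m y := by
      intro y; apply monotone_nat_of_le_succ; intro m; rw [hPsucc]; linarith [hterm_nonneg m y]
    have hPub : ∀ m y, P m y + ρ (Ns (2*m)) y ≤ ρ (Ns 0) y := by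
      intro m y
      induction m with
      | zero => simp [hP0 y]
      | succ m ih =>
        have h1 := hPsucc m y
        have h2 : ρ (Ns (2*m+2)) y ≤ ρ (Ns (2*m+1)) y :=
          hρanti y (le_of_lt (hNsmono (Nat.lt_succ_self (2*m+1))))
        have e : 2*(m+1) = 2*m+2 := by ring
        rw [e, h1]
        linarith
    have hPle : ∀ m y, P m y ≤ ρ (Ns 0) y := fun m y => by
      linarith [hPub m y, hρ0 (Ns (2*m)) y]
    have hPb2C : ∀ m y, P m y ≤ 2*C := fun m y => (hPle m y).trans (hρb _ y)
    have bddP : ∀ y, BddAbove (Set.range fun m => P m y) := fun y =>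
      ⟨2*C, by rintro _ ⟨m, rfl⟩; exact hPb2C m y⟩
    have hPub2 : ∀ j y, P (j+1) y ≤ ρ (Ns 0) y - ρ (Ns (2*j+1)) y := by
      intro j y
      have h0 := hPub j y
      have h1 := hPsucc j y
      rw [h1]; linarith
    have hPtail : ∀ j m y, P m y ≤ P (j+1) y + ρ (Ns (2*j+2)) y := by
      intro j m y
      rcases le_or_gt m (j+1) with h | h
      · exact le_trans (hPmono y h) (by linarith [hρ0 (Ns (2*j+2)) y])
      · have claim : ∀ m, j+1 ≤ m → P m y + ρ (Ns (2*m)) y ≤ P (j+1) y + ρ (Ns (2*j+2)) y := by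
          intro m hm
          induction m, hm using Nat.le_induction with
          | base =>
            have e : 2*(j+1) = 2*j+2 := by ring
            rw [e]
          | succ m hm ih =>
            have h1 := hPsucc m y
            have h2 : ρ (Ns (2*m+2)) y ≤ ρ (Ns (2*m+1)) y :=
              hρanti y (le_of_lt (hNsmono (Nat.lt_succ_self (2*m+1))))
            have e : 2*(m+1) = 2*m+2 := by ring
            rw [e, h1]
            linarith
        have := claim m (le_of_lt h)
        linarith [hρ0 (Ns (2*m)) y]
    -- the "sliding hump" function
    set φS : X → ℝ := fun y => ⨆ m, P m y with hφS
    have hφSm : Measurable φS := measurable_iSup_bdd hPm hPb2C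
    have hφS0 : ∀ y, 0 ≤ φS y := fun y =>
      le_trans (le_of_eq (hP0 y).symm) (le_ciSup (bddP y) 0)
    have hφSb : ∀ y, φS y ≤ 2*C := fun y => ciSup_le fun m => hPb2C m y
    have hφSabs : ∀ y, |φS y| ≤ 2*C := fun y => abs_le.mpr ⟨by linarith [hφS0 y], hφSb y⟩
    have hφSmem : MemLinf φS := ⟨hφSm, 2*C, hφSabs⟩
    have hφSP : ∀ m y, P m y ≤ φS y := fun m y => le_ciSup (bddP y) m
    have hφStail : ∀ j y, φS y ≤ P (j+1) y + ρ (Ns (2*j+2)) y := fun j y =>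
      ciSup_le fun m => hPtail j m y
    have hsubseq : Tendsto (fun k => ergAvg μG T (F (ns k)) φS x) atTop (𝓝 (AT φS x)) :=
      (hAT φS hφSmem).comp (hnsmono.tendsto_atTop)
    -- even indices: lower bound
    have heven : ∀ j, a - 2*ε ≤ ergAvg μG T (F (ns (2*j))) φS x := by
      intro j
      have hsingle : ∀ y, ρ (Ns (2*j)) y - ρ (Ns (2*j+1)) y ≤ φS y := by
        intro y
        have h1 := hφSP (j+1) y
        rw [hPsucc j y] at h1
        linarith [hPnonneg j y]
      have habs : ∀ y, |ρ (Ns (2*j)) y - ρ (Ns (2*j+1)) y| ≤ 4*C := fun y =>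
        (abs_sub _ _).trans (by linarith [hρabs (Ns (2*j)) y, hρabs (Ns (2*j+1)) y])
      have h1 : ergAvg μG T (F (ns (2*j))) (fun y => ρ (Ns (2*j)) y - ρ (Ns (2*j+1)) y) x
          ≤ ergAvg μG T (F (ns (2*j))) φS x :=
        ergAvg_mono hT (hFfin _) ((hρm _).sub (hρm _)) hφSm habs hφSabs hsingle x
      rw [ergAvg_sub_s15 hT (hFfin _) (hρm _) (hρm _) (hρabs _) (hρabs _) x] at h1
      have h3 := abs_le.mp (hC2 (2*j))
      have h4 := hC3 (2*j)
      have h5 := haA (Ns (2*j))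
      linarith [h3.1, h3.2]
    -- odd indices: upper bound
    have hodd : ∀ j, ergAvg μG T (F (ns (2*j+1))) φS x ≤ 4*ε := by
      intro j
      have hτ0 : ∀ y, 0 ≤ φS y - P (j+1) y := fun y => by linarith [hφSP (j+1) y]
      have hτle : ∀ y, φS y - P (j+1) y ≤ ρ (Ns (2*j+2)) y := fun y => by
        linarith [hφStail j y]
      have hτm : Measurable fun y => φS y - P (j+1) y := hφSm.sub (hPm (j+1))
      have hτb : ∀ y, |φS y - P (j+1) y| ≤ 2*C := fun y =>
        abs_le.mpr ⟨by linarith [hτ0 y], by linarith [hτle y, hρb (Ns (2*j+2)) y]⟩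
      have hPabs : ∀ y, |P (j+1) y| ≤ 2*C := fun y =>
        abs_le.mpr ⟨by linarith [hPnonneg (j+1) y], hPb2C (j+1) y⟩
      -- split: ν τ = ν φS - ν P(j+1)
      have hsplit := ergAvg_sub_s15 hT (hFfin (ns (2*j+1))) hφSm (hPm (j+1)) hφSabs hPabs x
      -- τ average ≤ ε
      have hτend : ergAvg μG T (F (ns (2*j+1))) (fun y => φS y - P (j+1) y) x
          ≤ ergAvg μG T (F (ns (2*j+1))) (ρ (Ns (2*j+2))) x :=
        ergAvg_mono hT (hFfin _) hτm (hρm _) hτb (hρabs _) hτle x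
      have hτε : ergAvg μG T (F (ns (2*j+1))) (ρ (Ns (2*j+2))) x ≤ ε := by
        have := hC3 (2*j+1)
        have e : 2*j+1+1 = 2*j+2 := by omega
        rw [e] at this
        exact this
      -- σ average bound
      have hσmono : ergAvg μG T (F (ns (2*j+1))) (P (j+1)) x
          ≤ ergAvg μG T (F (ns (2*j+1))) (fun y => ρ (Ns 0) y - ρ (Ns (2*j+1)) y) x := by
        apply ergAvg_mono hT (hFfin _) (hPm (j+1)) ((hρm _).sub (hρm _)) hPabs
          (C₂ := 4*C) (fun y => (abs_sub _ _).trans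
            (by linarith [hρabs (Ns 0) y, hρabs (Ns (2*j+1)) y])) (hPub2 j) x
      rw [ergAvg_sub_s15 hT (hFfin _) (hρm _) (hρm _) (hρabs _) (hρabs _) x] at hσmono
      have h8 := abs_le.mp (hC1 (2*j+1))
      have h9 := abs_le.mp (hC2 (2*j+1))
      have h5 := haA (Ns (2*j+1))
      have hN0 : ergAvg μG T (F (ns (2*j+1))) (ρ (Ns 0)) x - A (Ns 0) ≤ ε := by
        rw [hNs0]; exact h8.2
      have hAN0 : A (Ns 0) ≤ a + ε := by rw [hNs0]; exact hN₀
      linarith [h9.1, h9.2]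
    -- contradiction
    have hevens : StrictMono fun j : ℕ => 2*j := fun i j h => by dsimp only; omega
    have hodds : StrictMono fun j : ℕ => 2*j+1 := fun i j h => by dsimp only; omega
    have hlo : a - 2*ε ≤ AT φS x :=
      ge_of_tendsto (hsubseq.comp hevens.tendsto_atTop) (Eventually.of_forall heven)
    have hhi : AT φS x ≤ 4*ε :=
      le_of_tendsto (hsubseq.comp hodds.tendsto_atTop) (Eventually.of_forall hodd)
    rw [hε] at hlo hhi
    linarith
  -- conclude the diagonal convergence
  have hψlconv := hAT ψl ⟨hψlm, C, hCl⟩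
  rw [Metric.tendsto_atTop]
  intro ε hε
  obtain ⟨N₁, hN₁⟩ : ∃ N, A N < ε/4 := by
    apply exists_lt_of_ciInf_lt
    rw [← ha, hae]; linarith
  have e1 : ∀ᶠ n in atTop, ergAvg μG T (F n) (ρ N₁) x < ε/2 :=
    (hAN N₁).eventually_lt_const (by linarith)
  have e2 : ∀ᶠ n in atTop, |ergAvg μG T (F n) ψl x - AT ψl x| < ε/2 := by
    have := (Metric.tendsto_atTop.mp hψlconv) (ε/2) (by linarith)
    obtain ⟨M, hM⟩ := this
    filter_upwards [eventually_ge_atTop M] with n hn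
    simpa [Real.dist_eq] using hM n hn
  have e3 : ∀ᶠ n in atTop, N₁ ≤ n := eventually_ge_atTop N₁
  obtain ⟨N₂, hN₂⟩ := (e1.and (e2.and e3)).exists_forall_of_atTop
  refine ⟨N₂, fun n hn => ?_⟩
  obtain ⟨he1, he2, he3⟩ := hN₂ n hn
  -- |ν_n ψ_n - ν_n ψl| ≤ ν_n (D n) ≤ ν_n (ρ N₁)
  have hdiff : |ergAvg μG T (F n) (ψ n) x - ergAvg μG T (F n) ψl x|
      ≤ ergAvg μG T (F n) (ρ N₁) x := by
    rw [← ergAvg_sub_s15 hT (hFfin n) (hψm n) hψlm (fun y => hC n y) hCl x]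
    refine le_trans (ergAvg_abs hT (hFfin n) ((hψm n).sub hψlm) (C := 2*C)
      (fun y => (abs_sub _ _).trans (by linarith [hC n y, hCl y])) x) ?_
    have e : (fun y => |ψ n y - ψl y|) = D n := rfl
    change ergAvg μG T (F n) (D n) x ≤ _
    exact ergAvg_mono hT (hFfin n) (hDm n) (hρm N₁)
      (fun y => abs_le.mpr ⟨by linarith [hD0 n y], hDb n y⟩) (hρabs N₁)
      (fun y => hρge N₁ n y he3) x
  have hρnn : 0 ≤ ergAvg μG T (F n) (ρ N₁) x := ergAvg_nonneg (hρ0 N₁) x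
  rw [Real.dist_eq]
  have htri := abs_sub_le (ergAvg μG T (F n) (ψ n) x) (ergAvg μG T (F n) ψl x) (AT ψl x)
  have := abs_le.mp hdiff
  linarith [this.1, this.2]


end DZDiag
section DZInv

set_option linter.unusedSectionVars false
open MeasureTheory Filter Topology
open scoped symmDiff Pointwise

variable {X : Type} [MeasurableSpace X]
variable {G : Type} [MeasurableSpace G]

lemma invSigmaAE_def {T : G → X → X} {μ : Measure X} {B : Set X} :
    MeasurableSet[invSigmaAE T μ] B ↔ MeasurableSet B ∧ ∀ g, μ ((T g ⁻¹' B) ∆ B) = 0 :=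
  Iff.rfl

lemma invSigmaAE_le (T : G → X → X) (μ : Measure X) :
    invSigmaAE T μ ≤ (inferInstance : MeasurableSpace X) := fun _ hs => hs.1

/-- A function measurable w.r.t. the a.e.-invariant σ-algebra is a.e. invariant. -/
lemma aeinv_of_mMeas {T : G → X → X} {μ : Measure X} {h : X → ℝ}
    (hh : Measurable[invSigmaAE T μ] h) (g : G) :
    (fun y => h (T g y)) =ᵐ[μ] h := by
  have hB : ∀ q : ℚ, MeasurableSet[invSigmaAE T μ] (h ⁻¹' Set.Iic (q : ℝ)) :=
    fun q => hh measurableSet_Iic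
  have hnull : ∀ q : ℚ, μ ((T g ⁻¹' (h ⁻¹' Set.Iic (q : ℝ))) ∆ (h ⁻¹' Set.Iic (q : ℝ))) = 0 :=
    fun q => (hB q).2 g
  have hsub : {y | h (T g y) ≠ h y} ⊆
      ⋃ q : ℚ, ((T g ⁻¹' (h ⁻¹' Set.Iic (q : ℝ))) ∆ (h ⁻¹' Set.Iic (q : ℝ))) := by
    intro y hy
    rcases lt_trichotomy (h (T g y)) (h y) with hlt | heq | hlt
    · obtain ⟨q, hq1, hq2⟩ := exists_rat_btwn hlt
      refine Set.mem_iUnion.2 ⟨q, ?_⟩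
      rw [Set.mem_symmDiff]
      left
      refine ⟨le_of_lt hq1, fun hc => ?_⟩
      have : h y ≤ (q : ℝ) := hc
      linarith
    · exact absurd heq hy
    · obtain ⟨q, hq1, hq2⟩ := exists_rat_btwn hlt
      refine Set.mem_iUnion.2 ⟨q, ?_⟩
      rw [Set.mem_symmDiff]
      right
      refine ⟨le_of_lt hq1, fun hc => ?_⟩
      have : h (T g y) ≤ (q : ℝ) := hc
      linarith
  have : μ {y | ¬ h (T g y) = h y} = 0 :=
    measure_mono_null hsub (measure_iUnion_null fun q => hnull q)
  exact ae_iff.mpr this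

/-- Conversely, a measurable a.e.-invariant function is measurable w.r.t. the
a.e.-invariant σ-algebra. -/
lemma mMeas_of_aeinv {T : G → X → X} {μ : Measure X} {u : X → ℝ} (hu : Measurable u)
    (hinv : ∀ g : G, (fun y => u (T g y)) =ᵐ[μ] u) :
    Measurable[invSigmaAE T μ] u := by
  apply measurable_of_Iic (mδ := invSigmaAE T μ)
  intro c
  rw [invSigmaAE_def]
  refine ⟨hu measurableSet_Iic, fun g => ?_⟩
  have hsub : (T g ⁻¹' (u ⁻¹' Set.Iic c)) ∆ (u ⁻¹' Set.Iic c) ⊆ {y | ¬ u (T g y) = u y} := by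
    intro y hy
    rw [Set.mem_symmDiff] at hy
    rcases hy with ⟨h1, h2⟩ | ⟨h1, h2⟩
    · intro hc
      exact h2 (by simpa [Set.mem_preimage, ← hc] using (h1 : u (T g y) ≤ c))
    · intro hc
      exact h2 (by simpa [Set.mem_preimage, hc] using (h1 : u y ≤ c))
  exact measure_mono_null hsub (ae_iff.mp (hinv g))

/-- The ergodic average of an a.e.-invariant function is a.e. equal to the function. -/
lemma ergAvg_of_aeinv {μG : Measure G} {T : G → X → X}
    (hT : Measurable fun p : G × X => T p.1 p.2)
    {μ : Measure X} [SFinite μ] {p : X → ℝ} (hpm : Measurable p)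
    (hpinv : ∀ g : G, (fun y => p (T g y)) =ᵐ[μ] p)
    {K : Set G} (hKfin : μG K ≠ ∞) (hKpos : (μG K).toReal ≠ 0) :
    (fun x => ergAvg μG T K p x) =ᵐ[μ] p := by
  haveI : IsFiniteMeasure (μG.restrict K) :=
    ⟨by rw [Measure.restrict_apply_univ]; exact lt_top_iff_ne_top.mpr hKfin⟩
  set N : Set (X × G) := {q | ¬ p (T q.2 q.1) = p q.1} with hN
  have hNm : MeasurableSet N := by
    have h1 : Measurable fun q : X × G => p (T q.2 q.1) :=
      hpm.comp (hT.comp (measurable_snd.prodMk measurable_fst))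
    have h2 : Measurable fun q : X × G => p q.1 := hpm.comp measurable_fst
    exact (measurableSet_eq_fun h1 h2).compl
  have hswap : (μ.prod (μG.restrict K)) N = 0 := by
    have hN'm : MeasurableSet (Prod.swap ⁻¹' N : Set (G × X)) := hNm.preimage measurable_swap
    have h0 : ((μG.restrict K).prod μ) (Prod.swap ⁻¹' N) = 0 := by
      rw [Measure.measure_prod_null hN'm]
      exact ae_of_all _ fun g => ae_iff.mp (hpinv g)
    calc (μ.prod (μG.restrict K)) N
        = (Measure.map Prod.swap ((μG.restrict K).prod μ)) N := by rw [Measure.prod_swap]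
      _ = ((μG.restrict K).prod μ) (Prod.swap ⁻¹' N) := Measure.map_apply measurable_swap hNm
      _ = 0 := h0
  have haex : ∀ᵐ x ∂μ, (μG.restrict K) (Prod.mk x ⁻¹' N) = 0 :=
    (Measure.measure_prod_null hNm).mp hswap
  filter_upwards [haex] with x hx
  have hptae : (fun g => p (T g x)) =ᵐ[μG.restrict K] fun _ => p x := ae_iff.mpr hx
  show (μG K).toReal⁻¹ * ∫ g in K, p (T g x) ∂μG = p x
  rw [integral_congr_ae hptae, setIntegral_const, measureReal_def, smul_eq_mul, ← mul_assoc,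
    inv_mul_cancel₀ hKpos, one_mul]

end DZInv
section DZTrans

set_option linter.unusedSectionVars false
open MeasureTheory Filter Topology
open scoped symmDiff Pointwise

variable {X : Type} [MeasurableSpace X]
variable {G : Type} [MeasurableSpace G]

/-- Integrability of a bounded measurable function on a finite restriction. -/
lemma integrable_of_bdd {ν : Measure G} [IsFiniteMeasure ν] {f : G → ℝ} (hf : Measurable f)
    {Cf : ℝ} (hCf : ∀ g, |f g| ≤ Cf) : Integrable f ν :=
  (integrable_const Cf).mono' hf.aestronglyMeasurable
    (ae_of_all _ fun g => by simpa [Real.norm_eq_abs] using hCf g)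

lemma abs_setIntegral_symmDiff {μG : Measure G} {f : G → ℝ} (hf : Measurable f)
    {Cf : ℝ} (hCf : ∀ g, |f g| ≤ Cf) (hCf0 : 0 ≤ Cf) {A B : Set G}
    (hA : MeasurableSet A) (hB : MeasurableSet B) (hAfin : μG A ≠ ∞) (hBfin : μG B ≠ ∞) :
    |∫ g in A, f g ∂μG - ∫ g in B, f g ∂μG| ≤ Cf * (μG (A ∆ B)).toReal := by
  have hIA : IntegrableOn f A μG := by
    haveI : IsFiniteMeasure (μG.restrict A) :=
      ⟨by rw [Measure.restrict_apply_univ]; exact lt_top_iff_ne_top.mpr hAfin⟩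
    exact integrable_of_bdd hf hCf
  have hIB : IntegrableOn f B μG := by
    haveI : IsFiniteMeasure (μG.restrict B) :=
      ⟨by rw [Measure.restrict_apply_univ]; exact lt_top_iff_ne_top.mpr hBfin⟩
    exact integrable_of_bdd hf hCf
  have hsplitA : ∫ g in A, f g ∂μG = (∫ g in A ∩ B, f g ∂μG) + ∫ g in A \ B, f g ∂μG := by
    rw [← setIntegral_union (Set.disjoint_left.mpr fun x hx1 hx2 => hx2.2 hx1.2) (hA.diff hB)
      (hIA.mono_set Set.inter_subset_left) (hIA.mono_set (Set.diff_subset)),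
      Set.inter_union_diff]
  have hsplitB : ∫ g in B, f g ∂μG = (∫ g in A ∩ B, f g ∂μG) + ∫ g in B \ A, f g ∂μG := by
    rw [← setIntegral_union (Set.disjoint_left.mpr fun x hx1 hx2 => hx2.2 hx1.1) (hB.diff hA)
      (hIB.mono_set Set.inter_subset_right) (hIB.mono_set (Set.diff_subset)), Set.inter_comm,
      Set.inter_union_diff]
  have hfinAB : μG (A \ B) ≠ ∞ := fun h =>
    hAfin (eq_top_iff.mpr (h ▸ measure_mono (Set.diff_subset)))
  have hfinBA : μG (B \ A) ≠ ∞ := fun h =>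
    hBfin (eq_top_iff.mpr (h ▸ measure_mono (Set.diff_subset)))
  have h1 : |∫ g in A \ B, f g ∂μG| ≤ Cf * (μG (A \ B)).toReal := by
    rw [← Real.norm_eq_abs]
    exact norm_setIntegral_le_of_norm_le_const (lt_top_iff_ne_top.mpr hfinAB)
      (fun g _ => by simpa [Real.norm_eq_abs] using hCf g)
  have h2 : |∫ g in B \ A, f g ∂μG| ≤ Cf * (μG (B \ A)).toReal := by
    rw [← Real.norm_eq_abs]
    exact norm_setIntegral_le_of_norm_le_const (lt_top_iff_ne_top.mpr hfinBA)
      (fun g _ => by simpa [Real.norm_eq_abs] using hCf g)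
  have hsymm : (μG (A ∆ B)).toReal = (μG (A \ B)).toReal + (μG (B \ A)).toReal := by
    rw [measure_symmDiff_eq hA.nullMeasurableSet hB.nullMeasurableSet,
      ENNReal.toReal_add hfinAB hfinBA]
  rw [hsplitA, hsplitB, hsymm]
  have := abs_sub (∫ g in A \ B, f g ∂μG) (∫ g in B \ A, f g ∂μG)
  have e : (∫ g in A ∩ B, f g ∂μG) + (∫ g in A \ B, f g ∂μG)
      - ((∫ g in A ∩ B, f g ∂μG) + ∫ g in B \ A, f g ∂μG)
      = (∫ g in A \ B, f g ∂μG) - ∫ g in B \ A, f g ∂μG := by ring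
  rw [e]
  calc |(∫ g in A \ B, f g ∂μG) - ∫ g in B \ A, f g ∂μG|
      ≤ |∫ g in A \ B, f g ∂μG| + |∫ g in B \ A, f g ∂μG| := abs_sub _ _
    _ ≤ Cf * (μG (A \ B)).toReal + Cf * (μG (B \ A)).toReal := add_le_add h1 h2
    _ = Cf * ((μG (A \ B)).toReal + (μG (B \ A)).toReal) := by ring

variable [Group G] [MeasurableMul G]

lemma smulSet_measurable {K : Set G} (hK : MeasurableSet K) (g₀ : G) :
    MeasurableSet (g₀ • K) := by
  have h : g₀ • K = (fun u => g₀⁻¹ * u) ⁻¹' K := by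
    ext u
    rw [Set.mem_smul_set_iff_inv_smul_mem]
    rfl
  rw [h]
  exact measurable_const_mul g₀⁻¹ hK

lemma smulSet_measure {μG : Measure G} [μG.IsMulLeftInvariant] (K : Set G) (g₀ : G) :
    μG (g₀ • K) = μG K := by
  have h : g₀ • K = (fun u => g₀⁻¹ * u) ⁻¹' K := by
    ext u
    rw [Set.mem_smul_set_iff_inv_smul_mem]
    rfl
  rw [h]
  exact measure_preimage_mul μG g₀⁻¹ K

lemma setIntegral_mul_left_translate {μG : Measure G} [μG.IsMulLeftInvariant]
    {f : G → ℝ} (hf : Measurable f) {K : Set G} (hK : MeasurableSet K) (g₀ : G) :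
    ∫ g in K, f (g₀ * g) ∂μG = ∫ u in g₀ • K, f u ∂μG := by
  have hpre : (fun g => g₀ * g) ⁻¹' (g₀ • K) = K := by
    ext u
    simp only [Set.mem_preimage]
    rw [Set.mem_smul_set_iff_inv_smul_mem]
    simp [smul_eq_mul, ← mul_assoc]
  have hc : ∫ u in g₀ • K, f u ∂μG = ∫ g in K, f (g₀ * g) ∂μG := by
    calc ∫ u in g₀ • K, f u ∂μG
        = ∫ u in g₀ • K, f u ∂(Measure.map (fun g => g₀ * g) μG) := by
          rw [map_mul_left_eq_self μG g₀]
      _ = ∫ g in (fun g => g₀ * g) ⁻¹' (g₀ • K), f (g₀ * g) ∂μG := by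
          rw [setIntegral_map (smulSet_measurable hK g₀)
            (by rw [map_mul_left_eq_self μG g₀]; exact hf.aestronglyMeasurable)
            (measurable_const_mul g₀).aemeasurable]
      _ = ∫ g in K, f (g₀ * g) ∂μG := by rw [hpre]
  exact hc.symm

/-- Uniform bound on the averages of a coboundary, in terms of the Følner ratio. -/
lemma ergAvg_cobound {μG : Measure G} [μG.IsMulLeftInvariant] {T : G → X → X}
    (hT : IsBorelAction G T) {χ : X → ℝ} (hχ : Measurable χ)
    {Cχ : ℝ} (hCχ : ∀ y, |χ y| ≤ Cχ) (hC0 : 0 ≤ Cχ) (g₀ : G) {K : Set G}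
    (hK : MeasurableSet K) (hKfin : μG K ≠ ∞) (x : X) :
    |ergAvg μG T K (fun y => χ (T g₀ y)) x - ergAvg μG T K χ x|
      ≤ Cχ * (μG ((g₀ • K) ∆ K)).toReal / (μG K).toReal := by
  have hfm : Measurable fun u : G => χ (T u x) := measurable_comp_act hT.measurable hχ x
  have key : ∫ g in K, χ (T g₀ (T g x)) ∂μG = ∫ u in g₀ • K, χ (T u x) ∂μG := by
    have h1 : ∀ g : G, χ (T g₀ (T g x)) = χ (T (g₀ * g) x) := fun g => by rw [hT.mul_act]
    calc ∫ g in K, χ (T g₀ (T g x)) ∂μG = ∫ g in K, χ (T (g₀ * g) x) ∂μG := by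
          exact integral_congr_ae (ae_of_all _ fun g => h1 g)
      _ = ∫ u in g₀ • K, χ (T u x) ∂μG := setIntegral_mul_left_translate hfm hK g₀
  have hKfin' : μG (g₀ • K) ≠ ∞ := by rw [smulSet_measure K g₀]; exact hKfin
  have hdiff : |(∫ u in g₀ • K, χ (T u x) ∂μG) - ∫ u in K, χ (T u x) ∂μG|
      ≤ Cχ * (μG ((g₀ • K) ∆ K)).toReal :=
    abs_setIntegral_symmDiff hfm (fun u => hCχ (T u x)) hC0 (smulSet_measurable hK g₀) hK
      hKfin' hKfin
  show |(μG K).toReal⁻¹ * ∫ g in K, χ (T g₀ (T g x)) ∂μG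
      - (μG K).toReal⁻¹ * ∫ g in K, χ (T g x) ∂μG| ≤ _
  rw [key, ← mul_sub, abs_mul, abs_of_nonneg (inv_nonneg.mpr ENNReal.toReal_nonneg)]
  calc (μG K).toReal⁻¹ * |(∫ u in g₀ • K, χ (T u x) ∂μG) - ∫ g in K, χ (T g x) ∂μG|
      ≤ (μG K).toReal⁻¹ * (Cχ * (μG ((g₀ • K) ∆ K)).toReal) :=
        mul_le_mul_of_nonneg_left hdiff (by positivity)
    _ = Cχ * (μG ((g₀ • K) ∆ K)).toReal / (μG K).toReal := by
        rw [div_eq_inv_mul]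

end DZTrans
section DZContr

set_option linter.unusedSectionVars false
open MeasureTheory Filter Topology
open scoped symmDiff Pointwise

variable {X : Type} [MeasurableSpace X]
variable {G : Type} [MeasurableSpace G]

/-- Cauchy–Schwarz for a finite measure: `(∫ u)² ≤ ν(univ) ∫ u²`. -/
lemma sq_integral_le {ν : Measure G} [IsFiniteMeasure ν] {u : G → ℝ} (hu : Measurable u)
    {Cu : ℝ} (hCu : ∀ g, |u g| ≤ Cu) :
    (∫ g, u g ∂ν) ^ 2 ≤ (ν Set.univ).toReal * ∫ g, (u g) ^ 2 ∂ν := by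
  set M : ℝ := (ν Set.univ).toReal with hM
  have hM0 : 0 ≤ M := ENNReal.toReal_nonneg
  set Cu' : ℝ := max Cu 0 with hCu'
  have hCu'' : ∀ g, |u g| ≤ Cu' := fun g => (hCu g).trans (le_max_left _ _)
  have hint : Integrable u ν := integrable_of_bdd hu hCu''
  have hint2 : Integrable (fun g => (u g) ^ 2) ν := by
    apply integrable_of_bdd (hu.pow_const 2) (Cf := Cu' ^ 2)
    intro g
    rw [abs_of_nonneg (sq_nonneg _), ← sq_abs]
    exact pow_le_pow_left₀ (abs_nonneg _) (hCu'' g) 2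
  rcases eq_or_ne M 0 with h0 | h0
  · have : ν Set.univ = 0 := by
      have := measure_ne_top ν Set.univ
      exact (ENNReal.toReal_eq_zero_iff _).mp h0 |>.resolve_right this
    have hν : ν = 0 := Measure.measure_univ_eq_zero.mp this
    simp [hν]
  · have hMpos : 0 < M := lt_of_le_of_ne hM0 (Ne.symm h0)
    set I : ℝ := ∫ g, u g ∂ν with hI
    set c : ℝ := I / M with hc
    have hexp : ∫ g, (u g - c) ^ 2 ∂ν = (∫ g, (u g) ^ 2 ∂ν) - 2 * c * I + c ^ 2 * M := by
      have h1 : ∀ g, (u g - c) ^ 2 = (u g) ^ 2 - 2 * c * u g + c ^ 2 := fun g => by ring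
      have hsub : Integrable (fun g => u g ^ 2 - 2 * c * u g) ν :=
        hint2.sub (hint.const_mul (2 * c))
      rw [integral_congr_ae (ae_of_all _ fun g => h1 g)]
      rw [integral_add hsub (integrable_const _),
        integral_sub hint2 (hint.const_mul (2 * c)), integral_const_mul, integral_const,
        smul_eq_mul, measureReal_def]
      ring
    have hnn : 0 ≤ ∫ g, (u g - c) ^ 2 ∂ν := integral_nonneg fun g => sq_nonneg _
    rw [hexp] at hnn
    have h2 : c * M = I := by
      rw [hc]; field_simp
    have h3 : c ^ 2 * M = I * c := by
      calc c ^ 2 * M = c * (c * M) := by ring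
        _ = c * I := by rw [h2]
        _ = I * c := by ring
    rw [h3] at hnn
    -- 0 ≤ ∫u² - 2cI + Ic = ∫u² - I·c = ∫u² - I²/M
    have h4 : I * c = I ^ 2 / M := by rw [hc]; ring
    rw [h4] at hnn
    have h5 : I ^ 2 / M ≤ ∫ g, (u g) ^ 2 ∂ν := by linarith
    calc I ^ 2 = (I ^ 2 / M) * M := by field_simp
      _ ≤ (∫ g, (u g) ^ 2 ∂ν) * M := mul_le_mul_of_nonneg_right h5 hM0
      _ = M * ∫ g, (u g) ^ 2 ∂ν := by ring

/-- The averaging operator is measurable in the point. -/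
lemma measurable_ergAvg {μG : Measure G} {T : G → X → X}
    (hT : Measurable fun p : G × X => T p.1 p.2)
    {χ : X → ℝ} (hχ : Measurable χ) {K : Set G} (hKfin : μG K ≠ ∞) :
    Measurable fun x => ergAvg μG T K χ x := by
  haveI : IsFiniteMeasure (μG.restrict K) :=
    ⟨by rw [Measure.restrict_apply_univ]; exact lt_top_iff_ne_top.mpr hKfin⟩
  apply Measurable.const_mul
  have : StronglyMeasurable fun x => ∫ g, χ (T g x) ∂(μG.restrict K) := by
    apply StronglyMeasurable.integral_prod_right (f := fun x g => χ (T g x))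
    exact (hχ.comp (hT.comp ((measurable_snd).prodMk measurable_fst))).stronglyMeasurable
  exact this.measurable

/-- `L²(μ)`-contraction property of the ergodic averages, for invariant `μ`. -/
lemma sq_integral_ergAvg_le {μG : Measure G} {T : G → X → X}
    (hT : Measurable fun p : G × X => T p.1 p.2)
    {μ : Measure X} [IsProbabilityMeasure μ] (hμT : ∀ g : G, Measure.map (T g) μ = μ)
    {χ : X → ℝ} (hχ : Measurable χ) {Cχ : ℝ} (hCχ : ∀ y, |χ y| ≤ Cχ)
    {K : Set G} (hKfin : μG K ≠ ∞) (hKpos : (μG K).toReal ≠ 0) :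
    ∫ x, (ergAvg μG T K χ x) ^ 2 ∂μ ≤ ∫ x, (χ x) ^ 2 ∂μ := by
  haveI : IsFiniteMeasure (μG.restrict K) :=
    ⟨by rw [Measure.restrict_apply_univ]; exact lt_top_iff_ne_top.mpr hKfin⟩
  set r : ℝ := (μG K).toReal with hr
  have hr0 : 0 ≤ r := ENNReal.toReal_nonneg
  have hrpos : 0 < r := lt_of_le_of_ne hr0 (Ne.symm hKpos)
  set Cχ' : ℝ := max Cχ 0 with hCχ'
  have hC' : ∀ y, |χ y| ≤ Cχ' := fun y => (hCχ y).trans (le_max_left _ _)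
  have hC'0 : 0 ≤ Cχ' := le_max_right _ _
  -- pointwise Cauchy–Schwarz
  have hpt : ∀ x, (ergAvg μG T K χ x) ^ 2 ≤ r⁻¹ * ∫ g in K, (χ (T g x)) ^ 2 ∂μG := by
    intro x
    have hcs := sq_integral_le (ν := μG.restrict K)
      (measurable_comp_act hT hχ x) (fun g => hC' (T g x))
    rw [Measure.restrict_apply_univ] at hcs
    show ((μG K).toReal⁻¹ * ∫ g in K, χ (T g x) ∂μG) ^ 2 ≤ _
    rw [mul_pow]
    calc ((μG K).toReal⁻¹) ^ 2 * (∫ g in K, χ (T g x) ∂μG) ^ 2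
        ≤ (r⁻¹) ^ 2 * (r * ∫ g in K, (χ (T g x)) ^ 2 ∂μG) := by
          apply mul_le_mul_of_nonneg_left hcs (by positivity)
      _ = r⁻¹ * ∫ g in K, (χ (T g x)) ^ 2 ∂μG := by
          field_simp
  -- integrability of both sides
  have hAb : ∀ x, |ergAvg μG T K χ x| ≤ Cχ' := fun x =>
    ergAvg_abs_le_s15 hKfin x (measurable_comp_act hT hχ x).aestronglyMeasurable hC'
  have hAm : Measurable fun x => ergAvg μG T K χ x := measurable_ergAvg hT hχ hKfin
  have hint1 : Integrable (fun x => (ergAvg μG T K χ x) ^ 2) μ := by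
    apply integrable_of_bdd (hAm.pow_const 2) (Cf := Cχ' ^ 2)
    intro x
    rw [abs_of_nonneg (sq_nonneg _), ← sq_abs]
    exact pow_le_pow_left₀ (abs_nonneg _) (hAb x) 2
  have hjm : Measurable fun q : X × G => (χ (T q.2 q.1)) ^ 2 :=
    ((hχ.comp (hT.comp ((measurable_snd).prodMk measurable_fst)))).pow_const 2
  have hintm : Measurable fun x => ∫ g in K, (χ (T g x)) ^ 2 ∂μG := by
    have : StronglyMeasurable fun x => ∫ g, (χ (T g x)) ^ 2 ∂(μG.restrict K) :=
      StronglyMeasurable.integral_prod_right (f := fun x g => (χ (T g x)) ^ 2)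
        hjm.stronglyMeasurable
    exact this.measurable
  have hbd2 : ∀ x, |∫ g in K, (χ (T g x)) ^ 2 ∂μG| ≤ Cχ' ^ 2 * r := by
    intro x
    rw [← Real.norm_eq_abs]
    apply norm_setIntegral_le_of_norm_le_const (lt_top_iff_ne_top.mpr hKfin)
    · intro g _
      rw [Real.norm_eq_abs, abs_of_nonneg (sq_nonneg _), ← sq_abs]
      exact pow_le_pow_left₀ (abs_nonneg _) (hC' (T g x)) 2
  have hint2 : Integrable (fun x => r⁻¹ * ∫ g in K, (χ (T g x)) ^ 2 ∂μG) μ :=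
    (integrable_of_bdd hintm hbd2).const_mul _
  have step1 : ∫ x, (ergAvg μG T K χ x) ^ 2 ∂μ
      ≤ ∫ x, r⁻¹ * ∫ g in K, (χ (T g x)) ^ 2 ∂μG ∂μ :=
    integral_mono hint1 hint2 fun x => hpt x
  have huncur : Integrable (Function.uncurry fun x (g : G) => (χ (T g x)) ^ 2)
      (μ.prod (μG.restrict K)) := integrable_of_bdd hjm (Cf := Cχ' ^ 2) (fun q => by
        show |(χ (T q.2 q.1)) ^ 2| ≤ Cχ' ^ 2
        rw [abs_of_nonneg (sq_nonneg _), ← sq_abs]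
        exact pow_le_pow_left₀ (abs_nonneg _) (hC' (T q.2 q.1)) 2)
  have hswap : ∫ x, (∫ g in K, (χ (T g x)) ^ 2 ∂μG) ∂μ
      = ∫ g in K, (∫ x, (χ (T g x)) ^ 2 ∂μ) ∂μG :=
    integral_integral_swap huncur
  have hinv : ∀ g : G, ∫ x, (χ (T g x)) ^ 2 ∂μ = ∫ y, (χ y) ^ 2 ∂μ := by
    intro g
    have hTg : Measurable (T g) := hT.comp (measurable_const.prodMk measurable_id)
    calc ∫ x, (χ (T g x)) ^ 2 ∂μ
        = ∫ y, (χ y) ^ 2 ∂(Measure.map (T g) μ) :=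
          (integral_map hTg.aemeasurable
            (by rw [hμT g]; exact (hχ.pow_const 2).aestronglyMeasurable)).symm
      _ = ∫ y, (χ y) ^ 2 ∂μ := by rw [hμT g]
  calc ∫ x, (ergAvg μG T K χ x) ^ 2 ∂μ
      ≤ ∫ x, r⁻¹ * ∫ g in K, (χ (T g x)) ^ 2 ∂μG ∂μ := step1
    _ = r⁻¹ * ∫ x, (∫ g in K, (χ (T g x)) ^ 2 ∂μG) ∂μ := integral_const_mul _ _
    _ = r⁻¹ * ∫ g in K, (∫ x, (χ (T g x)) ^ 2 ∂μ) ∂μG := by rw [hswap]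
    _ = r⁻¹ * ∫ g in K, (∫ y, (χ y) ^ 2 ∂μ) ∂μG := by
        congr 1
        exact integral_congr_ae (ae_of_all _ fun g => hinv g)
    _ = r⁻¹ * (r * ∫ y, (χ y) ^ 2 ∂μ) := by rw [setIntegral_const, measureReal_def, smul_eq_mul]
    _ = ∫ y, (χ y) ^ 2 ∂μ := by
        rw [← mul_assoc, inv_mul_cancel₀ hKpos, one_mul]

end DZContr
section DZLemmaA

set_option linter.unusedSectionVars false
set_option maxHeartbeats 1000000
open MeasureTheory Filter Topology
open scoped symmDiff Pointwise

variable {X : Type} [MeasurableSpace X]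

/-- The mean ergodic theorem along an `L∞`-admissible Følner sequence: the everywhere
limit of the ergodic averages of a bounded `ψ` is a.e. the conditional expectation on
the σ-algebra of a.e.-invariant sets. -/
theorem ergAvg_limit_eq_condexp
    {G : Type} [Group G] [MeasurableSpace G] [MeasurableMul G]
    (μG : Measure G) [μG.IsMulLeftInvariant]
    (T : G → X → X) (hT : IsBorelAction G T)
    (F : ℕ → Set G) (hFm : ∀ n, MeasurableSet (F n))
    (hFfin : ∀ n, μG (F n) ≠ ∞) (hFpos : ∀ n, (μG (F n)).toReal ≠ 0)
    (hFol : ∀ g : G, Tendsto (fun n => (μG ((g • F n) ∆ (F n))).toReal / (μG (F n)).toReal)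
      atTop (𝓝 0))
    (ψ : X → ℝ) (hψm : Measurable ψ) {C : ℝ} (hψb : ∀ y, |ψ y| ≤ C)
    (Aψ : X → ℝ)
    (hconv : ∀ x, Tendsto (fun n => ergAvg μG T (F n) ψ x) atTop (𝓝 (Aψ x)))
    (μ : Measure X) [IsProbabilityMeasure μ]
    (hμT : ∀ g : G, Measure.map (T g) μ = μ) :
    Aψ =ᵐ[μ] μ[ψ | invSigmaAE T μ] := by
  classical
  have hle : invSigmaAE T μ ≤ (inferInstance : MeasurableSpace X) := invSigmaAE_le T μ
  haveI : IsFiniteMeasure (μ.trim hle) := isFiniteMeasure_trim hle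
  set C' : ℝ := max C 0 with hC'
  have hψb' : ∀ y, |ψ y| ≤ C' := fun y => (hψb y).trans (le_max_left _ _)
  have hC'0 : 0 ≤ C' := le_max_right _ _
  have hTg : ∀ g : G, Measurable (T g) := fun g =>
    hT.measurable.comp (measurable_const.prodMk measurable_id)
  -- conditional expectation and its truncated representative
  set cψ : X → ℝ := μ[ψ | invSigmaAE T μ] with hcψ
  have hcψsm : StronglyMeasurable[invSigmaAE T μ] cψ := stronglyMeasurable_condExp
  have hcψbd : ∀ᵐ y ∂μ, |cψ y| ≤ C' := by
    have h1 : ∀ᵐ y ∂μ, |ψ y| ≤ ((⟨C', hC'0⟩ : NNReal) : ℝ) := ae_of_all _ fun y => hψb' y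
    exact ae_bdd_condExp_of_ae_bdd h1
  set p : X → ℝ := fun y => max (-C') (min C' (cψ y)) with hp
  have hpsm : StronglyMeasurable[invSigmaAE T μ] p :=
    (Measurable.max measurable_const
      (Measurable.min measurable_const hcψsm.measurable)).stronglyMeasurable
  have hpm : Measurable p := hpsm.measurable.mono hle le_rfl
  have hpb : ∀ y, |p y| ≤ C' := by
    intro y
    rw [abs_le]
    exact ⟨le_max_left _ _, max_le (by linarith) (min_le_left _ _)⟩
  have hpeq : p =ᵐ[μ] cψ := by
    filter_upwards [hcψbd] with y hy
    have h1 := abs_le.mp hy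
    have hmin : min C' (cψ y) = cψ y := min_eq_right h1.2
    have hmax : max (-C') (cψ y) = cψ y := max_eq_right h1.1
    show max (-C') (min C' (cψ y)) = cψ y
    rw [hmin, hmax]
  have hpinv : ∀ g : G, (fun y => p (T g y)) =ᵐ[μ] p := fun g =>
    aeinv_of_mMeas hpsm.measurable g
  -- w := ψ - p
  set w : X → ℝ := fun y => ψ y - p y with hw
  have hwm : Measurable w := hψm.sub hpm
  have hwb : ∀ y, |w y| ≤ 2 * C' := fun y => (abs_sub _ _).trans
    (by linarith [hψb' y, hpb y])
  have memOf : ∀ {f : X → ℝ}, Measurable f → ∀ {Cf : ℝ}, (∀ y, |f y| ≤ Cf) → MemLp f 2 μ :=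
    fun {f} hf {Cf} hCf => MemLp.of_bound hf.aestronglyMeasurable Cf
      (ae_of_all _ fun y => by simpa [Real.norm_eq_abs] using hCf y)
  -- the coboundary subspace
  set D : Set (Lp ℝ 2 μ) := {d | ∃ (χ : X → ℝ) (_ : Measurable χ) (Cχ : ℝ)
    (_ : ∀ y, |χ y| ≤ Cχ) (g₀ : G) (hmem : MemLp (fun y => χ (T g₀ y) - χ y) 2 μ),
    d = hmem.toLp _} with hD
  set Kc := (Submodule.span ℝ D).topologicalClosure with hKc
  haveI : CompleteSpace Kc :=
    (Submodule.isClosed_topologicalClosure _).isComplete.completeSpace_coe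
  set W : Lp ℝ 2 μ := (memOf hwm hwb).toLp w with hW
  set u : Lp ℝ 2 μ := W - (Kc.orthogonalProjectionOnto W : Lp ℝ 2 μ) with hu
  have huorth : u ∈ Kcᗮ := Kc.sub_starProjection_mem_orthogonal W
  obtain ⟨u', hu'sm, hu'ae⟩ : ∃ u' : X → ℝ, StronglyMeasurable u' ∧ (↑↑u : X → ℝ) =ᵐ[μ] u' :=
    ⟨(Lp.aestronglyMeasurable u).mk _, (Lp.aestronglyMeasurable u).stronglyMeasurable_mk,
      (Lp.aestronglyMeasurable u).ae_eq_mk⟩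
  have hu'm : Measurable u' := hu'sm.measurable
  have hu'int : Integrable u' μ := ((Lp.memLp u).integrable one_le_two).congr hu'ae
  -- orthogonality to coboundaries
  have hinner0 : ∀ (χ : X → ℝ), Measurable χ → ∀ (Cχ : ℝ), (∀ y, |χ y| ≤ Cχ) → ∀ g₀ : G,
      ∫ y, (χ (T g₀ y) - χ y) * u' y ∂μ = 0 := by
    intro χ hχ Cχ hCχ g₀
    have hmemc : MemLp (fun y => χ (T g₀ y) - χ y) 2 μ := by
      have hmf : Measurable fun y => χ (T g₀ y) - χ y := (hχ.comp (hTg g₀)).sub hχ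
      apply memOf hmf (Cf := 2 * max Cχ 0)
      intro y
      have h1 : |χ (T g₀ y)| ≤ max Cχ 0 := (hCχ _).trans (le_max_left _ _)
      have h2 : |χ y| ≤ max Cχ 0 := (hCχ _).trans (le_max_left _ _)
      exact (abs_sub _ _).trans (by linarith)
    have hdmem : hmemc.toLp _ ∈ Kc := Submodule.le_topologicalClosure _
      (Submodule.subset_span ⟨χ, hχ, Cχ, hCχ, g₀, hmemc, rfl⟩)
    have h0 : inner (𝕜 := ℝ) (hmemc.toLp _) u = 0 :=
      (Submodule.mem_orthogonal _ _).mp huorth _ hdmem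
    rw [L2.inner_def] at h0
    simp only [RCLike.inner_apply, starRingEnd_apply, star_trivial] at h0
    rw [← h0]
    apply integral_congr_ae
    filter_upwards [hmemc.coeFn_toLp, hu'ae] with y h1 h2
    rw [h1, h2]; ring
  -- invariance of u'
  have hu'inv : ∀ g : G, (fun y => u' (T g y)) =ᵐ[μ] u' := by
    suffices h : ∀ g₀ : G, (fun y => u' (T g₀⁻¹ y)) =ᵐ[μ] u' by
      intro g
      have := h g⁻¹
      rwa [inv_inv] at this
    intro g₀
    set v : X → ℝ := fun y => u' (T g₀⁻¹ y) - u' y with hv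
    have hvm : Measurable v := (hu'm.comp (hTg g₀⁻¹)).sub hu'm
    have hcomp_int : ∀ g : G, Integrable (fun y => u' (T g y)) μ := by
      intro g
      have hmp : MeasurePreserving (T g) μ μ := ⟨hTg g, hμT g⟩
      exact (hmp.integrable_comp hu'int.aestronglyMeasurable).mpr hu'int
    have hvint : Integrable v μ := (hcomp_int g₀⁻¹).sub hu'int
    have hkey : ∀ (χ : X → ℝ), Measurable χ → ∀ Cχ : ℝ, (∀ y, |χ y| ≤ Cχ) →
        ∫ y, χ y * v y ∂μ = 0 := by
      intro χ hχ Cχ hCχ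
      have h1 := hinner0 χ hχ Cχ hCχ g₀
      have h2 : ∫ y, χ (T g₀ y) * u' y ∂μ = ∫ z, χ z * u' (T g₀⁻¹ z) ∂μ := by
        have hfm : Measurable fun z => χ z * u' (T g₀⁻¹ z) := hχ.mul (hu'm.comp (hTg g₀⁻¹))
        have step : ∫ z, χ z * u' (T g₀⁻¹ z) ∂μ
            = ∫ y, χ (T g₀ y) * u' (T g₀⁻¹ (T g₀ y)) ∂μ := by
          conv_lhs => rw [← hμT g₀]
          exact integral_map (hTg g₀).aemeasurable
            (by rw [hμT g₀]; exact hfm.aestronglyMeasurable)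
        rw [step]
        apply integral_congr_ae
        apply ae_of_all
        intro y
        show χ (T g₀ y) * u' y = χ (T g₀ y) * u' (T g₀⁻¹ (T g₀ y))
        rw [hT.mul_act, inv_mul_cancel, hT.one_act]
      have hCχ' : ∀ y, |χ y| ≤ max Cχ 0 := fun y => (hCχ y).trans (le_max_left _ _)
      have hgm : Measurable fun y => χ (T g₀ y) := hχ.comp (hTg g₀)
      have hint1 : Integrable (fun y => χ (T g₀ y) * u' y) μ := by
        apply hu'int.bdd_mul (c := max Cχ 0) hgm.aestronglyMeasurable
        exact ae_of_all _ fun y => by simpa [Real.norm_eq_abs] using hCχ' (T g₀ y)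
      have hint2 : Integrable (fun y => χ y * u' y) μ := by
        apply hu'int.bdd_mul (c := max Cχ 0) hχ.aestronglyMeasurable
        exact ae_of_all _ fun y => by simpa [Real.norm_eq_abs] using hCχ' y
      have hint3 : Integrable (fun y => χ y * u' (T g₀⁻¹ y)) μ := by
        apply (hcomp_int g₀⁻¹).bdd_mul (c := max Cχ 0) hχ.aestronglyMeasurable
        exact ae_of_all _ fun y => by simpa [Real.norm_eq_abs] using hCχ' y
      have hexp : ∫ y, (χ (T g₀ y) - χ y) * u' y ∂μ
          = (∫ y, χ (T g₀ y) * u' y ∂μ) - ∫ y, χ y * u' y ∂μ := by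
        rw [← integral_sub hint1 hint2]
        apply integral_congr_ae
        exact ae_of_all _ fun y => by ring
      have hvexp : ∫ y, χ y * v y ∂μ
          = (∫ y, χ y * u' (T g₀⁻¹ y) ∂μ) - ∫ y, χ y * u' y ∂μ := by
        rw [← integral_sub hint3 hint2]
        apply integral_congr_ae
        exact ae_of_all _ fun y => by rw [hv]; ring
      rw [hvexp, ← h2]
      rw [hexp] at h1
      linarith
    set χs : X → ℝ := fun y => if 0 < v y then 1 else if v y < 0 then -1 else 0 with hχs
    have hχsm : Measurable χs := by
      apply Measurable.ite (measurableSet_lt measurable_const hvm) measurable_const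
      exact Measurable.ite (measurableSet_lt hvm measurable_const) measurable_const
        measurable_const
    have hχsb : ∀ y, |χs y| ≤ 1 := by
      intro y
      show |if 0 < v y then (1:ℝ) else if v y < 0 then -1 else 0| ≤ 1
      split_ifs <;> simp
    have habs : ∀ y, χs y * v y = |v y| := by
      intro y
      show (if 0 < v y then (1:ℝ) else if v y < 0 then -1 else 0) * v y = |v y|
      rcases lt_trichotomy (v y) 0 with h | h | h
      · rw [if_neg (by linarith), if_pos h, abs_of_neg h]; ring
      · rw [h]; simp
      · rw [if_pos h, abs_of_pos h]; ring
    have h3 : ∫ y, |v y| ∂μ = 0 := by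
      rw [← integral_congr_ae (ae_of_all _ fun y => habs y)]
      exact hkey χs hχsm 1 hχsb
    have h4 : (fun y => |v y|) =ᵐ[μ] 0 :=
      (integral_eq_zero_iff_of_nonneg (fun y => abs_nonneg _) hvint.abs).mp h3
    filter_upwards [h4] with y hy
    have h5 : |v y| = 0 := hy
    have h6 : v y = 0 := abs_eq_zero.mp h5
    have h7 : u' (T g₀⁻¹ y) - u' y = 0 := h6
    linarith
  have hu'minv : Measurable[invSigmaAE T μ] u' := mMeas_of_aeinv hu'm hu'inv
  -- ⟪W, u⟫ = 0 via the conditional expectation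
  have hWu : inner (𝕜 := ℝ) W u = 0 := by
    rw [L2.inner_def]
    simp only [RCLike.inner_apply, starRingEnd_apply, star_trivial]
    have hae : (fun a => (↑↑u : X → ℝ) a * (↑↑W : X → ℝ) a) =ᵐ[μ] fun a => u' a * w a := by
      filter_upwards [MemLp.coeFn_toLp (memOf hwm hwb), hu'ae] with a h1 h2
      rw [← hW] at h1
      rw [h1, h2]
    rw [integral_congr_ae hae]
    have hintψ : Integrable ψ μ := integrable_of_bdd hψm hψb'
    have hbψ : ∀ᵐ y ∂μ, ‖ψ y‖ ≤ C' :=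
      ae_of_all _ fun y => by simpa [Real.norm_eq_abs] using hψb' y
    have hintψu : Integrable (fun y => ψ y * u' y) μ :=
      hu'int.bdd_mul hψm.aestronglyMeasurable hbψ
    have hintuψ : Integrable (u' * ψ) μ :=
      hintψu.congr (ae_of_all _ fun y => mul_comm (ψ y) (u' y))
    have hcond : μ[u' * ψ | invSigmaAE T μ] =ᵐ[μ] u' * μ[ψ | invSigmaAE T μ] :=
      condExp_mul_of_stronglyMeasurable_left hu'minv.stronglyMeasurable hintuψ hintψ
    have e1 : ∫ y, (u' * ψ) y ∂μ = ∫ y, (u' * μ[ψ | invSigmaAE T μ]) y ∂μ := by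
      rw [← integral_condExp hle (f := u' * ψ)]
      exact integral_congr_ae hcond
    have hintup : Integrable (fun y => p y * u' y) μ :=
      hu'int.bdd_mul hpm.aestronglyMeasurable
        (ae_of_all _ fun y => by simpa [Real.norm_eq_abs] using hpb y)
    have hsplit : ∫ a, u' a * w a ∂μ = (∫ a, ψ a * u' a ∂μ) - ∫ a, p a * u' a ∂μ := by
      rw [← integral_sub hintψu hintup]
      exact integral_congr_ae (ae_of_all _ fun a => by rw [hw]; ring)
    have e2 : ∫ a, p a * u' a ∂μ = ∫ y, u' y * cψ y ∂μ := by
      apply integral_congr_ae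
      filter_upwards [hpeq] with a ha
      rw [ha]; ring
    have e0 : ∫ a, ψ a * u' a ∂μ = ∫ y, u' y * cψ y ∂μ := by
      have r1 : ∫ a, ψ a * u' a ∂μ = ∫ y, (u' * ψ) y ∂μ :=
        integral_congr_ae (ae_of_all _ fun a => mul_comm (ψ a) (u' a))
      rw [r1, e1]
      rfl
    rw [hsplit, e0, e2, sub_self]
  -- u = 0, hence W lies in the closed span of coboundaries
  have hproj0 : inner (𝕜 := ℝ) ((Kc.orthogonalProjectionOnto W : Lp ℝ 2 μ)) u = 0 :=
    (Submodule.mem_orthogonal _ _).mp huorth _ (Kc.orthogonalProjectionOnto W).2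
  have hu0 : u = 0 := by
    have h3 : inner (𝕜 := ℝ) u u
        = inner (𝕜 := ℝ) W u - inner (𝕜 := ℝ) ((Kc.orthogonalProjectionOnto W : Lp ℝ 2 μ)) u := by
      rw [hu, inner_sub_left]
    have h1 : inner (𝕜 := ℝ) u u = 0 := by rw [h3, hWu, hproj0, sub_zero]
    have h4 : ‖u‖ ^ 2 = 0 := by rw [← real_inner_self_eq_norm_sq]; exact h1
    exact norm_eq_zero.mp (sq_eq_zero_iff.mp h4)
  have hWKc : W ∈ Kc := by
    have hWeq : W = (Kc.orthogonalProjectionOnto W : Lp ℝ 2 μ) := by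
      have h := hu0
      rw [hu, sub_eq_zero] at h
      exact h
    rw [hWeq]
    exact (Kc.orthogonalProjectionOnto W).2
  -- bridge between Lp norms and integrals of squares
  have bridge : ∀ {f : X → ℝ} (hf : MemLp f 2 μ), ‖hf.toLp f‖ ^ 2 = ∫ y, (f y) ^ 2 ∂μ := by
    intro f hf
    rw [← real_inner_self_eq_norm_sq, L2.inner_def]
    simp only [RCLike.inner_apply, starRingEnd_apply, star_trivial]
    apply integral_congr_ae
    filter_upwards [hf.coeFn_toLp] with y hy
    rw [hy]; ring
  -- elements of the span are averaged to zero in L²(μ)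
  have spanprop : ∀ v ∈ Submodule.span ℝ D, ∃ (v₀ : X → ℝ) (_ : Measurable v₀) (Cv : ℝ)
      (_ : ∀ y, |v₀ y| ≤ Cv) (hmem : MemLp v₀ 2 μ), hmem.toLp v₀ = v ∧
      Tendsto (fun n => ∫ x, (ergAvg μG T (F n) v₀ x) ^ 2 ∂μ) atTop (𝓝 0) := by
    intro v hv
    induction hv using Submodule.span_induction with
    | mem d hd =>
      obtain ⟨χ, hχ, Cχ, hCχ, g₀, hmemc, rfl⟩ := hd
      set Cχ' : ℝ := max Cχ 0 with hCχ'
      have hC1 : ∀ y, |χ y| ≤ Cχ' := fun y => (hCχ y).trans (le_max_left _ _)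
      have hC10 : 0 ≤ Cχ' := le_max_right _ _
      set v₀ : X → ℝ := fun y => χ (T g₀ y) - χ y with hv₀
      have hv₀m : Measurable v₀ := (hχ.comp (hTg g₀)).sub hχ
      have hv₀b : ∀ y, |v₀ y| ≤ 2 * Cχ' := fun y =>
        (abs_sub _ _).trans (by linarith [hC1 (T g₀ y), hC1 y])
      refine ⟨v₀, hv₀m, 2 * Cχ', hv₀b, hmemc, rfl, ?_⟩
      -- the averages of a coboundary go to 0 uniformly
      have hptbd : ∀ n x, |ergAvg μG T (F n) v₀ x|
          ≤ Cχ' * (μG ((g₀ • F n) ∆ (F n))).toReal / (μG (F n)).toReal := by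
        intro n x
        have hmg : Measurable fun y => χ (T g₀ y) := hχ.comp (hTg g₀)
        have hs := ergAvg_sub_s15 (χ₁ := fun y => χ (T g₀ y)) hT.measurable (hFfin n) hmg hχ
          (fun y => hC1 (T g₀ y)) hC1 x
        have hcb := ergAvg_cobound hT hχ hC1 hC10 g₀ (hFm n) (hFfin n) x
        calc |ergAvg μG T (F n) v₀ x|
            = |ergAvg μG T (F n) (fun y => χ (T g₀ y)) x - ergAvg μG T (F n) χ x| := by
              rw [hv₀, ← hs]
          _ ≤ _ := hcb
      have hratio : Tendsto
          (fun n => Cχ' * ((μG ((g₀ • F n) ∆ (F n))).toReal / (μG (F n)).toReal))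
          atTop (𝓝 0) := by
        have := (hFol g₀).const_mul Cχ'
        simpa using this
      have hJb : ∀ n, ∫ x, (ergAvg μG T (F n) v₀ x) ^ 2 ∂μ
          ≤ (Cχ' * ((μG ((g₀ • F n) ∆ (F n))).toReal / (μG (F n)).toReal)) ^ 2 := by
        intro n
        have hAm : Measurable fun x => ergAvg μG T (F n) v₀ x :=
          measurable_ergAvg hT.measurable hv₀m (hFfin n)
        have hub : ∀ x, (ergAvg μG T (F n) v₀ x) ^ 2
            ≤ (Cχ' * ((μG ((g₀ • F n) ∆ (F n))).toReal / (μG (F n)).toReal)) ^ 2 := by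
          intro x
          rw [← sq_abs (ergAvg μG T (F n) v₀ x)]
          apply pow_le_pow_left₀ (abs_nonneg _)
          have h := hptbd n x
          calc |ergAvg μG T (F n) v₀ x|
              ≤ Cχ' * (μG ((g₀ • F n) ∆ (F n))).toReal / (μG (F n)).toReal := h
            _ = Cχ' * ((μG ((g₀ • F n) ∆ (F n))).toReal / (μG (F n)).toReal) := by ring
        have hib : Integrable (fun x => (ergAvg μG T (F n) v₀ x) ^ 2) μ := by
          apply integrable_of_bdd (hAm.pow_const 2) (Cf := (2 * Cχ') ^ 2)
          intro x
          rw [abs_of_nonneg (sq_nonneg _), ← sq_abs]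
          exact pow_le_pow_left₀ (abs_nonneg _)
            (ergAvg_abs_le_s15 (hFfin n) x
              (measurable_comp_act hT.measurable hv₀m x).aestronglyMeasurable hv₀b) 2
        calc ∫ x, (ergAvg μG T (F n) v₀ x) ^ 2 ∂μ
            ≤ ∫ _, (Cχ' * ((μG ((g₀ • F n) ∆ (F n))).toReal / (μG (F n)).toReal)) ^ 2 ∂μ :=
              integral_mono hib (integrable_const _) hub
          _ = (Cχ' * ((μG ((g₀ • F n) ∆ (F n))).toReal / (μG (F n)).toReal)) ^ 2 := by
              simp
      have hJ0 : ∀ n, 0 ≤ ∫ x, (ergAvg μG T (F n) v₀ x) ^ 2 ∂μ :=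
        fun n => integral_nonneg fun x => sq_nonneg _
      have hsq : Tendsto
          (fun n => (Cχ' * ((μG ((g₀ • F n) ∆ (F n))).toReal / (μG (F n)).toReal)) ^ 2)
          atTop (𝓝 0) := by
        have := hratio.pow 2
        simpa using this
      exact tendsto_of_tendsto_of_tendsto_of_le_of_le tendsto_const_nhds hsq hJ0 hJb
    | zero =>
      refine ⟨fun _ => 0, measurable_const, 0, fun y => by simp, memOf measurable_const
        (fun y => by simp : ∀ y, |(0:ℝ)| ≤ (0:ℝ)), ?_, ?_⟩
      · exact MemLp.toLp_zero _
      · have hz : ∀ n, ∫ x, (ergAvg μG T (F n) (fun _ => (0:ℝ)) x) ^ 2 ∂μ = 0 := by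
          intro n
          have : ∀ x, ergAvg μG T (F n) (fun _ => (0:ℝ)) x = 0 := by
            intro x
            show (μG (F n)).toReal⁻¹ * ∫ g in F n, (0:ℝ) ∂μG = 0
            simp
          simp [this]
        simpa [hz] using tendsto_const_nhds (α := ℝ) (f := atTop (α := ℕ))
    | add v1 v2 hv1 hv2 ih1 ih2 =>
      obtain ⟨a₀, ha₀m, Ca, ha₀b, hmema, hta, hJa⟩ := ih1
      obtain ⟨b₀, hb₀m, Cb, hb₀b, hmemb, htb, hJb⟩ := ih2
      have hsm : Measurable fun y => a₀ y + b₀ y := ha₀m.add hb₀m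
      have hsb : ∀ y, |a₀ y + b₀ y| ≤ Ca + Cb := fun y =>
        (abs_add_le _ _).trans (add_le_add (ha₀b y) (hb₀b y))
      refine ⟨fun y => a₀ y + b₀ y, hsm, Ca + Cb, hsb, memOf hsm hsb, ?_, ?_⟩
      · have h := MemLp.toLp_add hmema hmemb
        rw [← hta, ← htb, ← h]
        rfl
      · -- (A(a+b))² ≤ 2 (Aa)² + 2 (Ab)²
        have hJ0 : ∀ n, 0 ≤ ∫ x, (ergAvg μG T (F n) (fun y => a₀ y + b₀ y) x) ^ 2 ∂μ :=
          fun n => integral_nonneg fun x => sq_nonneg _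
        have hub : ∀ n, ∫ x, (ergAvg μG T (F n) (fun y => a₀ y + b₀ y) x) ^ 2 ∂μ
            ≤ 2 * (∫ x, (ergAvg μG T (F n) a₀ x) ^ 2 ∂μ)
              + 2 * ∫ x, (ergAvg μG T (F n) b₀ x) ^ 2 ∂μ := by
          intro n
          have hAa : Measurable fun x => ergAvg μG T (F n) a₀ x :=
            measurable_ergAvg hT.measurable ha₀m (hFfin n)
          have hAb : Measurable fun x => ergAvg μG T (F n) b₀ x :=
            measurable_ergAvg hT.measurable hb₀m (hFfin n)
          have hint_a : Integrable (fun x => (ergAvg μG T (F n) a₀ x) ^ 2) μ := by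
            apply integrable_of_bdd (hAa.pow_const 2) (Cf := Ca ^ 2)
            intro x
            rw [abs_of_nonneg (sq_nonneg _), ← sq_abs]
            exact pow_le_pow_left₀ (abs_nonneg _)
              (ergAvg_abs_le_s15 (hFfin n) x
                (measurable_comp_act hT.measurable ha₀m x).aestronglyMeasurable ha₀b) 2
          have hint_b : Integrable (fun x => (ergAvg μG T (F n) b₀ x) ^ 2) μ := by
            apply integrable_of_bdd (hAb.pow_const 2) (Cf := Cb ^ 2)
            intro x
            rw [abs_of_nonneg (sq_nonneg _), ← sq_abs]
            exact pow_le_pow_left₀ (abs_nonneg _)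
              (ergAvg_abs_le_s15 (hFfin n) x
                (measurable_comp_act hT.measurable hb₀m x).aestronglyMeasurable hb₀b) 2
          have hint_s : Integrable
              (fun x => (ergAvg μG T (F n) (fun y => a₀ y + b₀ y) x) ^ 2) μ := by
            apply integrable_of_bdd
              ((measurable_ergAvg hT.measurable hsm (hFfin n)).pow_const 2)
              (Cf := (Ca + Cb) ^ 2)
            intro x
            rw [abs_of_nonneg (sq_nonneg _), ← sq_abs]
            exact pow_le_pow_left₀ (abs_nonneg _)
              (ergAvg_abs_le_s15 (hFfin n) x
                (measurable_comp_act hT.measurable hsm x).aestronglyMeasurable hsb) 2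
          have hptw : ∀ x, (ergAvg μG T (F n) (fun y => a₀ y + b₀ y) x) ^ 2
              ≤ 2 * (ergAvg μG T (F n) a₀ x) ^ 2 + 2 * (ergAvg μG T (F n) b₀ x) ^ 2 := by
            intro x
            rw [ergAvg_add hT.measurable (hFfin n) ha₀m hb₀m ha₀b hb₀b x]
            nlinarith [sq_nonneg (ergAvg μG T (F n) a₀ x - ergAvg μG T (F n) b₀ x)]
          calc ∫ x, (ergAvg μG T (F n) (fun y => a₀ y + b₀ y) x) ^ 2 ∂μ
              ≤ ∫ x, (2 * (ergAvg μG T (F n) a₀ x) ^ 2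
                  + 2 * (ergAvg μG T (F n) b₀ x) ^ 2) ∂μ :=
                integral_mono hint_s ((hint_a.const_mul 2).add (hint_b.const_mul 2)) hptw
            _ = 2 * (∫ x, (ergAvg μG T (F n) a₀ x) ^ 2 ∂μ)
                + 2 * ∫ x, (ergAvg μG T (F n) b₀ x) ^ 2 ∂μ := by
                rw [integral_add (hint_a.const_mul 2) (hint_b.const_mul 2),
                  integral_const_mul, integral_const_mul]
        have hlim : Tendsto (fun n => 2 * (∫ x, (ergAvg μG T (F n) a₀ x) ^ 2 ∂μ)
            + 2 * ∫ x, (ergAvg μG T (F n) b₀ x) ^ 2 ∂μ) atTop (𝓝 0) := by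
          have h := (hJa.const_mul 2).add (hJb.const_mul 2)
          simpa using h
        exact tendsto_of_tendsto_of_tendsto_of_le_of_le tendsto_const_nhds hlim hJ0 hub
    | smul c v1 hv1 ih =>
      obtain ⟨a₀, ha₀m, Ca, ha₀b, hmema, hta, hJa⟩ := ih
      have hsm : Measurable fun y => c * a₀ y := ha₀m.const_mul c
      have hsb : ∀ y, |c * a₀ y| ≤ |c| * Ca := fun y => by
        rw [abs_mul]
        exact mul_le_mul_of_nonneg_left (ha₀b y) (abs_nonneg c)
      refine ⟨fun y => c * a₀ y, hsm, |c| * Ca, hsb, memOf hsm hsb, ?_, ?_⟩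
      · have h := MemLp.toLp_const_smul c hmema
        rw [← hta, ← h]
        rfl
      · have heq : ∀ n, ∫ x, (ergAvg μG T (F n) (fun y => c * a₀ y) x) ^ 2 ∂μ
            = c ^ 2 * ∫ x, (ergAvg μG T (F n) a₀ x) ^ 2 ∂μ := by
          intro n
          rw [← integral_const_mul]
          apply integral_congr_ae
          apply ae_of_all
          intro x
          show ergAvg μG T (F n) (fun y => c * a₀ y) x ^ 2 = c ^ 2 * ergAvg μG T (F n) a₀ x ^ 2
          rw [ergAvg_const_mul c]
          ring
        have h := hJa.const_mul (c ^ 2)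
        simp only [mul_zero] at h
        exact h.congr fun n => (heq n).symm
  -- the averages of w tend to 0 in L²(μ)
  have hJw : Tendsto (fun n => ∫ x, (ergAvg μG T (F n) w x) ^ 2 ∂μ) atTop (𝓝 0) := by
    rw [Metric.tendsto_atTop]
    intro ε hε
    have hWcl : W ∈ closure (↑(Submodule.span ℝ D) : Set (Lp ℝ 2 μ)) := by
      have h1 := hWKc
      rw [hKc] at h1
      rw [← Submodule.topologicalClosure_coe]
      exact h1
    obtain ⟨v, hvmem, hdist⟩ := Metric.mem_closure_iff.mp hWcl (Real.sqrt (ε / 4))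
      (Real.sqrt_pos.mpr (by linarith))
    obtain ⟨v₀, hv₀m, Cv, hv₀b, hmemv, htoLp, hJv⟩ := spanprop v hvmem
    set r₀ : X → ℝ := fun y => w y - v₀ y with hr₀
    have hr₀m : Measurable r₀ := hwm.sub hv₀m
    have hr₀b : ∀ y, |r₀ y| ≤ 2 * C' + Cv := fun y =>
      (abs_sub _ _).trans (add_le_add (hwb y) (hv₀b y))
    have hdist2 : ∫ y, (r₀ y) ^ 2 ∂μ < ε / 4 := by
      have hb : ‖W - v‖ < Real.sqrt (ε / 4) := by
        rw [← dist_eq_norm]; exact hdist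
      have hWv : W - v = (memOf hr₀m hr₀b).toLp r₀ := by
        rw [hW, ← htoLp, ← MemLp.toLp_sub (memOf hwm hwb) hmemv]
        rfl
      have h2 : ‖(memOf hr₀m hr₀b).toLp r₀‖ ^ 2 < ε / 4 := by
        rw [← hWv]
        have h3 : ‖W - v‖ ^ 2 < Real.sqrt (ε / 4) ^ 2 :=
          pow_lt_pow_left₀ hb (norm_nonneg _) (by norm_num)
        rwa [Real.sq_sqrt (by linarith : (0:ℝ) ≤ ε / 4)] at h3
      rw [← bridge (memOf hr₀m hr₀b)]
      exact h2
    obtain ⟨N, hN⟩ :=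
      (hJv.eventually_lt_const (by linarith : (0:ℝ) < ε / 8)).exists_forall_of_atTop
    refine ⟨N, fun n hn => ?_⟩
    have h5 := hN n hn
    have hsplitA : ∀ x', ergAvg μG T (F n) w x'
        = ergAvg μG T (F n) v₀ x' + ergAvg μG T (F n) r₀ x' := by
      intro x'
      have hfe : w = fun y => v₀ y + r₀ y := by
        funext y
        show w y = v₀ y + (w y - v₀ y)
        ring
      conv_lhs => rw [hfe]
      exact ergAvg_add hT.measurable (hFfin n) hv₀m hr₀m hv₀b hr₀b x'
    have hAv : Measurable fun x' => ergAvg μG T (F n) v₀ x' :=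
      measurable_ergAvg hT.measurable hv₀m (hFfin n)
    have hAr : Measurable fun x' => ergAvg μG T (F n) r₀ x' :=
      measurable_ergAvg hT.measurable hr₀m (hFfin n)
    have hAw : Measurable fun x' => ergAvg μG T (F n) w x' :=
      measurable_ergAvg hT.measurable hwm (hFfin n)
    have hintv : Integrable (fun x => (ergAvg μG T (F n) v₀ x) ^ 2) μ := by
      apply integrable_of_bdd (hAv.pow_const 2) (Cf := Cv ^ 2)
      intro x
      rw [abs_of_nonneg (sq_nonneg _), ← sq_abs]
      exact pow_le_pow_left₀ (abs_nonneg _)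
        (ergAvg_abs_le_s15 (hFfin n) x
          (measurable_comp_act hT.measurable hv₀m x).aestronglyMeasurable hv₀b) 2
    have hintr : Integrable (fun x => (ergAvg μG T (F n) r₀ x) ^ 2) μ := by
      apply integrable_of_bdd (hAr.pow_const 2) (Cf := (2 * C' + Cv) ^ 2)
      intro x
      rw [abs_of_nonneg (sq_nonneg _), ← sq_abs]
      exact pow_le_pow_left₀ (abs_nonneg _)
        (ergAvg_abs_le_s15 (hFfin n) x
          (measurable_comp_act hT.measurable hr₀m x).aestronglyMeasurable hr₀b) 2
    have hints : Integrable (fun x => (ergAvg μG T (F n) w x) ^ 2) μ := by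
      apply integrable_of_bdd (hAw.pow_const 2) (Cf := (2 * C') ^ 2)
      intro x
      rw [abs_of_nonneg (sq_nonneg _), ← sq_abs]
      exact pow_le_pow_left₀ (abs_nonneg _)
        (ergAvg_abs_le_s15 (hFfin n) x
          (measurable_comp_act hT.measurable hwm x).aestronglyMeasurable hwb) 2
    have hJle : ∫ x, (ergAvg μG T (F n) w x) ^ 2 ∂μ
        ≤ 2 * (∫ x, (ergAvg μG T (F n) v₀ x) ^ 2 ∂μ)
          + 2 * ∫ x, (ergAvg μG T (F n) r₀ x) ^ 2 ∂μ := by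
      have hptw : ∀ x, (ergAvg μG T (F n) w x) ^ 2
          ≤ 2 * (ergAvg μG T (F n) v₀ x) ^ 2 + 2 * (ergAvg μG T (F n) r₀ x) ^ 2 := by
        intro x
        rw [hsplitA x]
        nlinarith [sq_nonneg (ergAvg μG T (F n) v₀ x - ergAvg μG T (F n) r₀ x)]
      calc ∫ x, (ergAvg μG T (F n) w x) ^ 2 ∂μ
          ≤ ∫ x, (2 * (ergAvg μG T (F n) v₀ x) ^ 2 + 2 * (ergAvg μG T (F n) r₀ x) ^ 2) ∂μ :=
            integral_mono hints ((hintv.const_mul 2).add (hintr.const_mul 2)) hptw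
        _ = 2 * (∫ x, (ergAvg μG T (F n) v₀ x) ^ 2 ∂μ)
            + 2 * ∫ x, (ergAvg μG T (F n) r₀ x) ^ 2 ∂μ := by
            rw [integral_add (hintv.const_mul 2) (hintr.const_mul 2), integral_const_mul,
              integral_const_mul]
    have hcontr : ∫ x, (ergAvg μG T (F n) r₀ x) ^ 2 ∂μ ≤ ∫ y, (r₀ y) ^ 2 ∂μ :=
      sq_integral_ergAvg_le hT.measurable hμT hr₀m hr₀b (hFfin n) (hFpos n)
    have hnn : 0 ≤ ∫ x, (ergAvg μG T (F n) w x) ^ 2 ∂μ := integral_nonneg fun x => sq_nonneg _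
    rw [Real.dist_eq, sub_zero, abs_of_nonneg hnn]
    linarith
  -- conclude: Aψ = p a.e.
  have hAb' : ∀ n x, |ergAvg μG T (F n) ψ x| ≤ C' := fun n x =>
    ergAvg_abs_le_s15 (hFfin n) x (measurable_comp_act hT.measurable hψm x).aestronglyMeasurable hψb'
  have claim1 : Tendsto (fun n => ∫ x, (ergAvg μG T (F n) ψ x - p x) ^ 2 ∂μ) atTop
      (𝓝 (∫ x, (Aψ x - p x) ^ 2 ∂μ)) := by
    apply tendsto_integral_of_dominated_convergence (fun _ => (2 * C') ^ 2)
    · exact fun n => (((measurable_ergAvg hT.measurable hψm (hFfin n)).sub hpm).pow_const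
        2).aestronglyMeasurable
    · exact integrable_const _
    · intro n
      apply ae_of_all
      intro x
      rw [Real.norm_eq_abs, abs_of_nonneg (sq_nonneg _), ← sq_abs]
      apply pow_le_pow_left₀ (abs_nonneg _)
      exact (abs_sub _ _).trans (by linarith [hAb' n x, hpb x])
    · apply ae_of_all
      intro x
      exact ((hconv x).sub tendsto_const_nhds).pow 2
  have heqn : ∀ n, ∫ x, (ergAvg μG T (F n) ψ x - p x) ^ 2 ∂μ
      = ∫ x, (ergAvg μG T (F n) w x) ^ 2 ∂μ := by
    intro n
    apply integral_congr_ae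
    have hinvp := ergAvg_of_aeinv (μG := μG) hT.measurable hpm hpinv (hFfin n) (hFpos n)
    filter_upwards [hinvp] with x hx
    have hsp : ergAvg μG T (F n) ψ x = ergAvg μG T (F n) p x + ergAvg μG T (F n) w x := by
      have hfe : ψ = fun y => p y + w y := by
        funext y
        show ψ y = p y + (ψ y - p y)
        ring
      conv_lhs => rw [hfe]
      exact ergAvg_add hT.measurable (hFfin n) hpm hwm hpb hwb x
    rw [hsp, hx]
    ring
  have claim2 : Tendsto (fun n => ∫ x, (ergAvg μG T (F n) ψ x - p x) ^ 2 ∂μ) atTop (𝓝 0) :=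
    hJw.congr fun n => (heqn n).symm
  have hlim0 : ∫ x, (Aψ x - p x) ^ 2 ∂μ = 0 := tendsto_nhds_unique claim1 claim2
  have hAψm : Measurable Aψ :=
    measurable_of_tendsto_metrizable' atTop
      (fun n => measurable_ergAvg hT.measurable hψm (hFfin n)) (tendsto_pi_nhds.mpr hconv)
  have hAψb : ∀ x, |Aψ x| ≤ C' := fun x =>
    le_of_tendsto ((hconv x).abs) (Eventually.of_forall fun n => hAb' n x)
  have hzero : (fun x => (Aψ x - p x) ^ 2) =ᵐ[μ] 0 := by
    refine (integral_eq_zero_iff_of_nonneg (fun x => sq_nonneg _) ?_).mp hlim0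
    apply integrable_of_bdd ((hAψm.sub hpm).pow_const 2) (Cf := (2 * C') ^ 2)
    intro x
    rw [abs_of_nonneg (sq_nonneg _), ← sq_abs]
    apply pow_le_pow_left₀ (abs_nonneg _)
    exact (abs_sub _ _).trans (by linarith [hAψb x, hpb x])
  have hfinal : Aψ =ᵐ[μ] p := by
    filter_upwards [hzero] with x hx
    have h1 : (Aψ x - p x) ^ 2 = 0 := hx
    have h2 : Aψ x - p x = 0 := pow_eq_zero_iff (by norm_num) |>.mp h1
    linarith
  exact hfinal.trans hpeq

end DZLemmaA
/-- **A Dunford–Zygmund-type `L∞`-pointwise ergodic theorem for products of amenable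
groups** (Proposition in §3.5 of the paper).  Let `G, H` be σ-compact amenable groups
with `L∞`-admissible Følner sequences `{F_n}` and `{K_n}` whose associated limit
operators on the Borel `G`-space resp. `H`-space `X` are `A_T` and `A_S`.  Then for
all Borel actions `G ↷_T X`, `H ↷_S X` and every `φ ∈ L∞(X)`, the double averages
`(1/(|F_n||K_n|)) ∫_{F_n} ∫_{K_n} T_g S_h φ(x) dh dg` converge for every `x ∈ X` to
`A_T(A_S(φ))(x)`; moreover, for every probability measure `μ` invariant under both
actions, `A_T(A_S(φ)) = E_μ(E_μ(φ | 𝒳_{S,μ}) | 𝒳_{G,μ})` μ-a.e. -/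
theorem dunford_zygmund_amenable
    {G : Type} [Group G] [TopologicalSpace G] [IsTopologicalGroup G] [LocallyCompactSpace G]
    [T2Space G] [MeasurableSpace G] [BorelSpace G] [SigmaCompactSpace G]
    (μG : Measure G) [μG.IsHaarMeasure]
    {H : Type} [Group H] [TopologicalSpace H] [IsTopologicalGroup H] [LocallyCompactSpace H]
    [T2Space H] [MeasurableSpace H] [BorelSpace H] [SigmaCompactSpace H]
    (μH : Measure H) [μH.IsHaarMeasure]
    (F : ℕ → Set G) (hF : IsFolnerNet μG F)
    (K : ℕ → Set H) (hK : IsFolnerNet μH K)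
    {X : Type} [MeasurableSpace X]
    (T : G → X → X) (hT : IsBorelAction G T)
    (S : H → X → X) (hS : IsBorelAction H S)
    -- {F_n} is L∞-admissible for G ↷_T X, with limit operator A_T mapping L∞ to L∞
    (AT : (X → ℝ) → X → ℝ)
    (hAT : ∀ φ : X → ℝ, MemLinf φ → MemLinf (AT φ) ∧
      ∀ x : X, Tendsto (fun n => ergAvg μG T (F n) φ x) atTop (𝓝 (AT φ x)))
    -- {K_n} is L∞-admissible for H ↷_S X, with limit operator A_S mapping L∞ to L∞
    (AS : (X → ℝ) → X → ℝ)
    (hAS : ∀ φ : X → ℝ, MemLinf φ → MemLinf (AS φ) ∧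
      ∀ x : X, Tendsto (fun n => ergAvg μH S (K n) φ x) atTop (𝓝 (AS φ x)))
    (φ : X → ℝ) (hφ : MemLinf φ) :
    -- the double ergodic averages converge everywhere to A_T(A_S(φ))
    (∀ x : X, Tendsto (fun n =>
        (μG (F n)).toReal⁻¹ * (μH (K n)).toReal⁻¹ *
          ∫ g in F n, (∫ h in K n, φ (S h (T g x)) ∂μH) ∂μG)
      atTop (𝓝 (AT (AS φ) x))) ∧
    -- identification with the iterated conditional expectation
    (∀ μ : Measure X, IsProbabilityMeasure μ →
      (∀ g : G, Measure.map (T g) μ = μ) → (∀ h : H, Measure.map (S h) μ = μ) →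
      AT (AS φ) =ᵐ[μ] μ[(μ[φ | invSigmaAE S μ]) | invSigmaAE T μ]) := by
  
  classical
  -- basic facts about the Følner sequences
  have hFm : ∀ n, MeasurableSet (F n) := fun n => (hF.1 n).isClosed.measurableSet
  have hKm : ∀ n, MeasurableSet (K n) := fun n => (hK.1 n).isClosed.measurableSet
  have hFfin : ∀ n, μG (F n) ≠ ∞ := fun n => (hF.1 n).measure_lt_top.ne
  have hKfin : ∀ n, μH (K n) ≠ ∞ := fun n => (hK.1 n).measure_lt_top.ne
  have hFpos : ∀ n, (μG (F n)).toReal ≠ 0 := fun n =>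
    ENNReal.toReal_ne_zero.mpr ⟨(hF.2.1 n).ne', hFfin n⟩
  have hKpos : ∀ n, (μH (K n)).toReal ≠ 0 := fun n =>
    ENNReal.toReal_ne_zero.mpr ⟨(hK.2.1 n).ne', hKfin n⟩
  obtain ⟨hφm, C, hφb⟩ := hφ
  set C' : ℝ := max C 0 with hC'
  have hφb' : ∀ y, |φ y| ≤ C' := fun y => (hφb y).trans (le_max_left _ _)
  have hC'0 : 0 ≤ C' := le_max_right _ _
  -- the inner averages
  set ψf : ℕ → X → ℝ := fun n y => ergAvg μH S (K n) φ y with hψf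
  have hψfm : ∀ n, Measurable (ψf n) := fun n =>
    measurable_ergAvg hS.measurable hφm (hKfin n)
  have hψfb : ∀ n y, |ψf n y| ≤ C' := fun n y =>
    ergAvg_abs_le_s15 (hKfin n) y
      (measurable_comp_act hS.measurable hφm y).aestronglyMeasurable hφb'
  have hψfconv : ∀ y, Tendsto (fun n => ψf n y) atTop (𝓝 (AS φ y)) := fun y =>
    (hAS φ ⟨hφm, C, hφb⟩).2 y
  obtain ⟨hASm, C₂, hASb⟩ := (hAS φ ⟨hφm, C, hφb⟩).1
  set CC : ℝ := max C' (max C₂ 0) with hCC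
  have hψfb2 : ∀ n y, |ψf n y| ≤ CC := fun n y => (hψfb n y).trans (le_max_left _ _)
  have hASb2 : ∀ y, |AS φ y| ≤ CC := fun y =>
    (hASb y).trans ((le_max_left _ _).trans (le_max_right _ _))
  constructor
  · -- Part 1: the double averages converge pointwise
    intro x
    have hdiag := diag_tendsto μG T hT.measurable F hFfin hFpos AT x
      (fun χ hχ => (hAT χ hχ).2 x) ψf (AS φ) hASm hψfm hψfb2 hASb2 hψfconv
    apply hdiag.congr
    intro n
    show ergAvg μG T (F n) (ψf n) x = _
    have hh : ergAvg μG T (F n) (ψf n) x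
        = (μG (F n)).toReal⁻¹ *
          ∫ g in F n, ((μH (K n)).toReal⁻¹ * ∫ h in K n, φ (S h (T g x)) ∂μH) ∂μG := rfl
    rw [hh, integral_const_mul]
    ring
  · -- Part 2: identification with the iterated conditional expectation
    intro μ hprob hTinv hSinv
    haveI := hprob
    have hS_ce : AS φ =ᵐ[μ] μ[φ | invSigmaAE S μ] :=
      ergAvg_limit_eq_condexp μH S hS K hKm hKfin hKpos (hK.2.2) φ hφm hφb' (AS φ)
        (fun x => (hAS φ ⟨hφm, C, hφb⟩).2 x) μ hSinv
    have hT_ce : AT (AS φ) =ᵐ[μ] μ[AS φ | invSigmaAE T μ] :=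
      ergAvg_limit_eq_condexp μG T hT F hFm hFfin hFpos (hF.2.2) (AS φ) hASm hASb2
        (AT (AS φ)) (fun x => (hAT (AS φ) ⟨hASm, C₂, hASb⟩).2 x) μ hTinv
    exact hT_ce.trans (condExp_congr_ae hS_ce)
end
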